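/- arXiv:2006.15308 — 4 statements merged into one kernel-verified Lean document; each statement's English description precedes it below -/
import Mathlib

section
/- The pure maxmin value is a lower bound on the average fitness in any neutrally stable configuration: if (μ*,b*) is an NSC, then Π_{(μ*,b*)} ≥ M̲, where M̲=max_{a∈A} min_{a'∈A} π(a,a'). -/
open scoped Classical
set_option maxHeartbeats 1000000

noncomputable section

variable {A : Type} [Fintype A]

/-- Mixed strategies over a finite action set. -/
def Mixed (A : Type) [Fintype A] : Type :=
  { p : A → ℝ // (∀ a, 0 ≤ p a) ∧ ∑ a, p a = 1 }

/-- The pure (degenerate) mixed strategy on action `a`. -/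
def pureStrat (a : A) : Mixed A :=
  ⟨fun a' => if a' = a then 1 else 0, by
    refine ⟨fun a' => ?_, by simp⟩
    by_cases h : a' = a <;> simp [h]⟩

/-- Bilinear extension of a payoff function to mixed strategies. -/
def exPay (f : A → A → ℝ) (σ σ' : Mixed A) : ℝ :=
  ∑ a, ∑ a', σ.1 a * σ'.1 a' * f a a'

/-- Best replies to `σ'` under utility `u`. -/
def BR (u : A → A → ℝ) (σ' : Mixed A) : Set (Mixed A) :=
  { σ | ∀ τ : Mixed A, exPay u τ σ' ≤ exPay u σ σ' }

/-- Undominated strategies under utility `u`: best replies to some strategy. -/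
def Undom (u : A → A → ℝ) : Set (Mixed A) :=
  { σ | ∃ σ' : Mixed A, σ ∈ BR u σ' }

/-- Nash equilibria of the complete-information game induced by utilities `u`, `u'`. -/
def NE (u u' : A → A → ℝ) : Set (Mixed A × Mixed A) :=
  { p | p.1 ∈ BR u p.2 ∧ p.2 ∈ BR u' p.1 }

/-- Deception equilibria: profiles maximising the deceiver's utility `u` subject
to the deceived party (with utility `u'`) playing an undominated strategy. -/
def DE (u u' : A → A → ℝ) : Set (Mixed A × Mixed A) :=
  { p | p.2 ∈ Undom u' ∧
      ∀ σ σ' : Mixed A, σ' ∈ Undom u' → exPay u σ σ' ≤ exPay u p.1 p.2 }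

/-- Fitness-maximising deception equilibria (fitness payoff `pay`). -/
def FMDE (pay u u' : A → A → ℝ) : Set (Mixed A × Mixed A) :=
  { p | p ∈ DE u u' ∧
      ∀ σ σ' : Mixed A, σ' ∈ Undom u' → exPay pay σ σ' ≤ exPay pay p.1 p.2 }

/-- A type: a subjective utility together with a cognitive level. -/
abbrev GType (A : Type) : Type := (A → A → ℝ) × ℕ+

/-- The environment: fitness payoffs, cognitive costs and deception probabilities. -/
structure Model (A : Type) [Fintype A] : Type where
  π : A → A → ℝ
  k : ℕ+ → ℝ
  q : ℕ+ → ℕ+ → ℝ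
  k_nonneg : ∀ n, 0 ≤ k n
  k_mono : StrictMono k
  k_one : k 1 = 0
  k_tendsto : Filter.Tendsto k Filter.atTop Filter.atTop
  q_nonneg : ∀ n n', 0 ≤ q n n'
  q_le_one : ∀ n n', q n n' ≤ 1
  q_pos_iff : ∀ n n', 0 < q n n' ↔ n' < n

/-- A finite-support probability distribution over types. -/
structure TypeDist (A : Type) [Fintype A] : Type where
  w : GType A →₀ ℝ
  nonneg : ∀ θ, 0 ≤ w θ
  total : ∑ θ ∈ w.support, w θ = 1

/-- A configuration: a type distribution together with a behaviour policy. -/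
structure Config {A : Type} [Fintype A] (M : Model A) : Type where
  dist : TypeDist A
  bN : GType A → GType A → Mixed A
  bD : GType A → GType A → Mixed A
  bN_mem : ∀ θ ∈ dist.w.support, ∀ θ' ∈ dist.w.support,
    M.q θ.2 θ'.2 + M.q θ'.2 θ.2 < 1 → (bN θ θ', bN θ' θ) ∈ NE θ.1 θ'.1
  bD_mem : ∀ θ ∈ dist.w.support, ∀ θ' ∈ dist.w.support,
    θ'.2 < θ.2 → (bD θ θ', bD θ' θ) ∈ DE θ.1 θ'.1

/-- The incumbents: the support of the type distribution. -/
def Config.supp {M : Model A} (c : Config M) : Finset (GType A) := c.dist.w.support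

/-- Conditional fitness of `θ` when matched against `θ'`. -/
def condFit {M : Model A} (c : Config M) (θ θ' : GType A) : ℝ :=
  (M.q θ.2 θ'.2 + M.q θ'.2 θ.2) * exPay M.π (c.bD θ θ') (c.bD θ' θ)
    + (1 - M.q θ.2 θ'.2 - M.q θ'.2 θ.2) * exPay M.π (c.bN θ θ') (c.bN θ' θ)

/-- Expected fitness of type `θ` in configuration `c`. -/
def expFit {M : Model A} (c : Config M) (θ : GType A) : ℝ :=
  (∑ θ' ∈ c.supp, c.dist.w θ' * condFit c θ θ') - M.k θ.2

/-- Average fitness in the population. -/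
def avgFit {M : Model A} (c : Config M) : ℝ :=
  ∑ θ ∈ c.supp, c.dist.w θ * expFit c θ

/-- Payoff function of the type game induced by configuration `c`. -/
def typePay {M : Model A} (c : Config M) (θ θ' : GType A) : ℝ :=
  condFit c θ θ' - M.k θ.2

/-- Bilinear extension of a type-game payoff to finitely supported weights. -/
def playT {A : Type} [Fintype A] (F : GType A → GType A → ℝ) (x y : GType A →₀ ℝ) : ℝ :=
  ∑ θ ∈ x.support, ∑ θ' ∈ y.support, x θ * y θ' * F θ θ'

/-- `μ` is a neutrally stable strategy of the symmetric game with pure-strategy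
set `S` and payoff `F`. -/
def IsNSSOn (F : GType A → GType A → ℝ) (S : Finset (GType A)) (μ : TypeDist A) : Prop :=
  ∀ ν : TypeDist A, ν.w.support ⊆ S →
    ∃ εb : ℝ, εb ∈ Set.Ioo (0:ℝ) 1 ∧ ∀ ε ∈ Set.Ioo (0:ℝ) εb,
      playT F ν.w ((1 - ε) • μ.w + ε • ν.w) ≤ playT F μ.w ((1 - ε) • μ.w + ε • ν.w)

/-- `ct` is focal with respect to `c`. -/
def Focal {M : Model A} (c ct : Config M) : Prop :=
  c.supp ⊆ ct.supp ∧
    ∀ θ ∈ c.supp, ∀ θ' ∈ c.supp, ct.bN θ θ' = c.bN θ θ' ∧ ct.bD θ θ' = c.bD θ θ'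

/-- Neutrally stable configuration. -/
def IsNSC {M : Model A} (c : Config M) : Prop :=
  ∀ μ' : TypeDist A, ∃ εb : ℝ, εb ∈ Set.Ioo (0:ℝ) 1 ∧ ∀ ε ∈ Set.Ioo (0:ℝ) εb,
    ∀ ct : Config M, Focal c ct → ct.dist.w = (1 - ε) • c.dist.w + ε • μ'.w →
      IsNSSOn (typePay ct) ct.supp c.dist

/-- The efficient payoff `π̂`. -/
def effPay (M : Model A) [Nonempty A] : ℝ :=
  Finset.univ.sup' Finset.univ_nonempty
    (fun p : A × A => (M.π p.1 p.2 + M.π p.2 p.1) / 2)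

/-- The deviation gain of action `a`. -/
def devGain (M : Model A) [Nonempty A] (a : A) : ℝ :=
  (Finset.univ.sup' Finset.univ_nonempty fun a' => M.π a' a) - M.π a a

/-- The effective cost of deception `c = min_{n ≥ 2} k_n / q(n,1)`. -/
def effCost (M : Model A) : ℝ :=
  ⨅ n : { m : ℕ+ // 2 ≤ m }, M.k n.1 / M.q n.1 1

/-- Pure configuration with outcome `a`. -/
def IsPureCfg {M : Model A} (c : Config M) (a : A) : Prop :=
  ∀ θ ∈ c.supp, ∀ θ' ∈ c.supp,
    (M.q θ.2 θ'.2 + M.q θ'.2 θ.2 < 1 → c.bN θ θ' = pureStrat a) ∧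
    (0 < M.q θ.2 θ'.2 → c.bD θ θ' = pureStrat a)

/-- Genericity of a symmetric game. -/
def Generic (pay : A → A → ℝ) : Prop :=
  ∀ a a' b b' : A, ({a, a'} : Finset A) ≠ {b, b'} →
    pay a a' ≠ pay b b' ∧ pay a a' + pay a' a ≠ pay b b' + pay b' b

/-- The pure maxmin value. -/
def maxminVal (M : Model A) [Nonempty A] : ℝ :=
  Finset.univ.sup' Finset.univ_nonempty fun a =>
    Finset.univ.inf' Finset.univ_nonempty fun a' => M.π a a'


section Stmt9Aux

lemma mixed_coord_le_one (σ : Mixed A) (a : A) : σ.1 a ≤ 1 := by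
  have h := σ.2.2
  calc σ.1 a ≤ ∑ b, σ.1 b :=
        Finset.single_le_sum (fun b _ => σ.2.1 b) (Finset.mem_univ a)
    _ = 1 := h

lemma pureStrat_coord_self (a : A) : (pureStrat a).1 a = 1 := by simp [pureStrat]

lemma mixed_eq_pure_of_coord_one (σ : Mixed A) (a : A) (h : σ.1 a = 1) :
    σ = pureStrat a := by
  have hz : ∑ x ∈ Finset.univ.erase a, σ.1 x = 0 := by
    have h2 := Finset.add_sum_erase Finset.univ σ.1 (Finset.mem_univ a)
    have h3 := σ.2.2
    linarith
  apply Subtype.ext; funext b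
  by_cases hb : b = a
  · subst hb; simpa [pureStrat] using h
  · have hb0 : σ.1 b = 0 :=
      (Finset.sum_eq_zero_iff_of_nonneg (fun x _ => σ.2.1 x)).mp hz b
        (Finset.mem_erase.mpr ⟨hb, Finset.mem_univ b⟩)
    simp [pureStrat, hb, hb0]

lemma exPay_pure_left (f : A → A → ℝ) (a : A) (σ : Mixed A) :
    exPay f (pureStrat a) σ = ∑ a', σ.1 a' * f a a' := by
  unfold exPay
  rw [Finset.sum_eq_single_of_mem a (Finset.mem_univ a)]
  · apply Finset.sum_congr rfl; intro a' _; simp [pureStrat]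
  · intro b _ hb
    apply Finset.sum_eq_zero; intro a' _; simp [pureStrat, hb]

lemma exPay_pure_right (f : A → A → ℝ) (σ : Mixed A) (a : A) :
    exPay f σ (pureStrat a) = ∑ b, σ.1 b * f b a := by
  unfold exPay
  apply Finset.sum_congr rfl; intro b _
  rw [Finset.sum_eq_single_of_mem a (Finset.mem_univ a)]
  · simp [pureStrat]
  · intro a' _ h; simp [pureStrat, h]

/-- The mutant's utility: it only cares about playing `astar`. -/
def starU (astar : A) : A → A → ℝ := fun a _ => if a = astar then 1 else 0

/-- The mutant type: the indicator utility with cognitive level 1. -/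
def starT (astar : A) : GType A := (starU astar, 1)

lemma exPay_starU (astar : A) (σ σ' : Mixed A) :
    exPay (starU astar) σ σ' = σ.1 astar := by
  unfold exPay starU
  rw [Finset.sum_eq_single_of_mem astar (Finset.mem_univ _)]
  · simp [← Finset.mul_sum, σ'.2.2]
  · intro b _ hb
    apply Finset.sum_eq_zero; intro a' _; simp [hb]

lemma pure_mem_BR_starU (astar : A) (σ' : Mixed A) :
    pureStrat astar ∈ BR (starU astar) σ' := by
  intro τ
  rw [exPay_starU, exPay_starU, pureStrat_coord_self]
  exact mixed_coord_le_one τ astar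

lemma eq_pure_of_mem_BR_starU (astar : A) (σ σ' : Mixed A)
    (h : σ ∈ BR (starU astar) σ') : σ = pureStrat astar := by
  have h1 := h (pureStrat astar)
  rw [exPay_starU, exPay_starU, pureStrat_coord_self] at h1
  exact mixed_eq_pure_of_coord_one σ astar (le_antisymm (mixed_coord_le_one σ astar) h1)

lemma mem_Undom_starU_iff (astar : A) (σ : Mixed A) :
    σ ∈ Undom (starU astar) ↔ σ = pureStrat astar := by
  constructor
  · rintro ⟨σ', h⟩; exact eq_pure_of_mem_BR_starU astar σ σ' h
  · rintro rfl; exact ⟨pureStrat astar, pure_mem_BR_starU astar _⟩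

/-- A pure best reply to the pure strategy `t` under utility `u`. -/
noncomputable def bestTo [Nonempty A] (u : A → A → ℝ) (t : A) : A :=
  (Finset.exists_mem_eq_sup' Finset.univ_nonempty (fun b => u b t)).choose

lemma bestTo_le [Nonempty A] (u : A → A → ℝ) (t : A) (b : A) :
    u b t ≤ u (bestTo u t) t := by
  have h := (Finset.exists_mem_eq_sup' Finset.univ_nonempty (fun b => u b t)).choose_spec
  calc u b t ≤ Finset.univ.sup' Finset.univ_nonempty (fun b => u b t) :=
        Finset.le_sup' (fun b => u b t) (Finset.mem_univ b)
    _ = u (bestTo u t) t := h.2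

lemma bestTo_mem_BR [Nonempty A] (u : A → A → ℝ) (t : A) :
    pureStrat (bestTo u t) ∈ BR u (pureStrat t) := by
  intro τ
  rw [exPay_pure_right, exPay_pure_right]
  have hR : ∑ b, (pureStrat (bestTo u t)).1 b * u b t = u (bestTo u t) t := by
    rw [Finset.sum_eq_single_of_mem (bestTo u t) (Finset.mem_univ _)]
    · simp [pureStrat]
    · intro b _ hb; simp [pureStrat, hb]
  rw [hR]
  calc ∑ b, τ.1 b * u b t ≤ ∑ b, τ.1 b * u (bestTo u t) t :=
        Finset.sum_le_sum fun b _ => mul_le_mul_of_nonneg_left (bestTo_le u t b) (τ.2.1 b)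
    _ = u (bestTo u t) t := by rw [← Finset.sum_mul, τ.2.2, one_mul]

lemma NE_star_fst [Nonempty A] (astar : A) (u : A → A → ℝ) :
    (pureStrat astar, pureStrat (bestTo u astar)) ∈ NE (starU astar) u :=
  ⟨pure_mem_BR_starU astar _, bestTo_mem_BR u astar⟩

lemma NE_star_snd [Nonempty A] (astar : A) (u : A → A → ℝ) :
    (pureStrat (bestTo u astar), pureStrat astar) ∈ NE u (starU astar) :=
  ⟨bestTo_mem_BR u astar, pure_mem_BR_starU astar _⟩

lemma NE_star_star (astar : A) :
    (pureStrat astar, pureStrat astar) ∈ NE (starU astar) (starU astar) :=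
  ⟨pure_mem_BR_starU astar _, pure_mem_BR_starU astar _⟩

lemma DE_star [Nonempty A] (astar : A) (u : A → A → ℝ) :
    (pureStrat (bestTo u astar), pureStrat astar) ∈ DE u (starU astar) := by
  refine ⟨(mem_Undom_starU_iff astar _).mpr rfl, ?_⟩
  intro σ σ' hσ'
  rw [(mem_Undom_starU_iff astar σ').mp hσ']
  exact bestTo_mem_BR u astar σ

lemma sum_support_mul (g : GType A →₀ ℝ) {S : Finset (GType A)} (hS : g.support ⊆ S)
    (φ : GType A → ℝ) :
    ∑ θ ∈ S, g θ * φ θ = ∑ θ ∈ g.support, g θ * φ θ :=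
  (Finset.sum_subset hS fun θ _ hθ => by
    rw [Finsupp.notMem_support_iff.mp hθ, zero_mul]).symm

lemma sum_mix (r s : ℝ) (g g' : GType A →₀ ℝ) (φ : GType A → ℝ) :
    ∑ θ ∈ (r • g + s • g').support, (r • g + s • g') θ * φ θ
      = r * ∑ θ ∈ g.support, g θ * φ θ + s * ∑ θ ∈ g'.support, g' θ * φ θ := by
  set S : Finset (GType A) := (r • g + s • g').support ∪ (g.support ∪ g'.support) with hS
  have hsub1 : (r • g + s • g').support ⊆ S := Finset.subset_union_left
  have hsub2 : g.support ⊆ S :=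
    Finset.subset_union_left.trans Finset.subset_union_right
  have hsub3 : g'.support ⊆ S :=
    Finset.subset_union_right.trans Finset.subset_union_right
  rw [← sum_support_mul _ hsub1 φ, ← sum_support_mul g hsub2 φ, ← sum_support_mul g' hsub3 φ]
  rw [Finset.mul_sum, Finset.mul_sum, ← Finset.sum_add_distrib]
  apply Finset.sum_congr rfl
  intro θ _
  rw [Finsupp.add_apply, Finsupp.smul_apply, Finsupp.smul_apply, smul_eq_mul, smul_eq_mul]
  ring

lemma playT_right_mix (F : GType A → GType A → ℝ) (x : GType A →₀ ℝ) (r s : ℝ)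
    (g g' : GType A →₀ ℝ) :
    playT F x (r • g + s • g') = r * playT F x g + s * playT F x g' := by
  unfold playT
  rw [Finset.mul_sum, Finset.mul_sum, ← Finset.sum_add_distrib]
  apply Finset.sum_congr rfl
  intro θ _
  have h1 : ∀ (y : GType A →₀ ℝ),
      ∑ θ' ∈ y.support, x θ * y θ' * F θ θ' = ∑ θ' ∈ y.support, y θ' * (x θ * F θ θ') :=
    fun y => Finset.sum_congr rfl fun θ' _ => by ring
  rw [h1, h1, h1, sum_mix r s g g' (fun θ' => x θ * F θ θ')]

lemma playT_single_left (F : GType A → GType A → ℝ) (ν : GType A) (y : GType A →₀ ℝ) :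
    playT F (Finsupp.single ν 1) y = ∑ θ' ∈ y.support, y θ' * F ν θ' := by
  unfold playT
  rw [Finsupp.support_single_ne_zero ν one_ne_zero, Finset.sum_singleton]
  apply Finset.sum_congr rfl
  intro θ' _
  rw [Finsupp.single_eq_same]; ring

lemma playT_self_eq_avgFit {M : Model A} (c : Config M) :
    playT (typePay c) c.dist.w c.dist.w = avgFit c := by
  unfold playT avgFit expFit typePay Config.supp
  apply Finset.sum_congr rfl
  intro θ _
  have h1 : ∀ θ', c.dist.w θ * c.dist.w θ' * (condFit c θ θ' - M.k θ.2)
      = c.dist.w θ * (c.dist.w θ' * condFit c θ θ') - c.dist.w θ * M.k θ.2 * c.dist.w θ' :=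
    fun θ' => by ring
  rw [Finset.sum_congr rfl fun θ' _ => h1 θ']
  rw [Finset.sum_sub_distrib, ← Finset.mul_sum, ← Finset.mul_sum, c.dist.total, mul_one]
  ring

lemma exists_maxmin_act [Nonempty A] (M : Model A) :
    ∃ a : A, ∀ σ : Mixed A, maxminVal M ≤ exPay M.π (pureStrat a) σ := by
  obtain ⟨a, -, ha⟩ := Finset.exists_mem_eq_sup' (Finset.univ_nonempty (α := A))
    (fun a => Finset.univ.inf' Finset.univ_nonempty fun a' => M.π a a')
  refine ⟨a, fun σ => ?_⟩
  rw [exPay_pure_left]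
  have h0 : maxminVal M = Finset.univ.inf' Finset.univ_nonempty fun a' => M.π a a' := ha
  rw [h0]
  calc (Finset.univ.inf' Finset.univ_nonempty fun a' => M.π a a')
      = (∑ a', σ.1 a') * (Finset.univ.inf' Finset.univ_nonempty fun a' => M.π a a') := by
        rw [σ.2.2, one_mul]
    _ = ∑ a', σ.1 a' * (Finset.univ.inf' Finset.univ_nonempty fun a' => M.π a a') := by
        rw [Finset.sum_mul]
    _ ≤ ∑ a', σ.1 a' * M.π a a' :=
        Finset.sum_le_sum fun a' _ => mul_le_mul_of_nonneg_left
          (Finset.inf'_le _ (Finset.mem_univ a')) (σ.2.1 a')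

lemma convex_lb (m lam X Y : ℝ) (h0 : 0 ≤ lam) (h1 : lam ≤ 1)
    (hX : 0 < lam → m ≤ X) (hY : lam < 1 → m ≤ Y) :
    m ≤ (0 + lam) * X + (1 - 0 - lam) * Y := by
  have hx' : lam * m ≤ lam * X := by
    rcases h0.eq_or_lt with h | h
    · rw [← h]; simp
    · exact mul_le_mul_of_nonneg_left (hX h) h0
  have hy' : (1 - lam) * m ≤ (1 - lam) * Y := by
    rcases h1.eq_or_lt with h | h
    · rw [h]; simp
    · exact mul_le_mul_of_nonneg_left (hY h) (by linarith)
  have hr : (0 + lam) * X + (1 - 0 - lam) * Y = lam * X + (1 - lam) * Y := by ring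
  rw [hr]; linarith

lemma mutant_condFit_ge [Nonempty A] {M : Model A} (d : Config M) (astar : A)
    (hg : ∀ σ : Mixed A, maxminVal M ≤ exPay M.π (pureStrat astar) σ)
    (hν : starT astar ∈ d.dist.w.support) {θ' : GType A} (hθ' : θ' ∈ d.dist.w.support) :
    maxminVal M ≤ condFit d (starT astar) θ' := by
  have hq0 : M.q (starT astar).2 θ'.2 = 0 := by
    rcases (M.q_nonneg (starT astar).2 θ'.2).eq_or_lt with h | h
    · exact h.symm
    · exact absurd ((M.q_pos_iff _ _).mp h) (not_lt.mpr θ'.2.one_le)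
  have hX : 0 < M.q θ'.2 (starT astar).2 →
      maxminVal M ≤ exPay M.π (d.bD (starT astar) θ') (d.bD θ' (starT astar)) := by
    intro hpos
    have hlt : (starT astar).2 < θ'.2 := (M.q_pos_iff _ _).mp hpos
    have hde := d.bD_mem θ' hθ' (starT astar) hν hlt
    have hpure : d.bD (starT astar) θ' = pureStrat astar :=
      (mem_Undom_starU_iff astar _).mp hde.1
    rw [hpure]; exact hg _
  have hY : M.q θ'.2 (starT astar).2 < 1 →
      maxminVal M ≤ exPay M.π (d.bN (starT astar) θ') (d.bN θ' (starT astar)) := by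
    intro hlt
    have hne := d.bN_mem (starT astar) hν θ' hθ' (by rw [hq0, zero_add]; exact hlt)
    have hpure : d.bN (starT astar) θ' = pureStrat astar :=
      eq_pure_of_mem_BR_starU astar _ _ hne.1
    rw [hpure]; exact hg _
  unfold condFit
  rw [hq0]
  exact convex_lb _ _ _ _ (M.q_nonneg _ _) (M.q_le_one _ _) hX hY

/-- The extension of a configuration to a population containing the mutant. -/
noncomputable def extCfg [Nonempty A] {M : Model A} (c : Config M) (astar : A)
    (d : TypeDist A) (hs : d.w.support ⊆ insert (starT astar) c.supp) : Config M where
  dist := d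
  bN := fun θ θ' =>
    if θ ∈ c.supp ∧ θ' ∈ c.supp then c.bN θ θ'
    else if θ = starT astar then pureStrat astar
    else pureStrat (bestTo θ.1 astar)
  bD := fun θ θ' =>
    if θ ∈ c.supp ∧ θ' ∈ c.supp then c.bD θ θ'
    else if θ = starT astar then pureStrat astar
    else pureStrat (bestTo θ.1 astar)
  bN_mem := by
    intro θ hθ θ' hθ' hq
    by_cases h1 : θ ∈ c.supp ∧ θ' ∈ c.supp
    · rw [if_pos h1, if_pos ⟨h1.2, h1.1⟩]
      exact c.bN_mem θ h1.1 θ' h1.2 hq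
    · rcases not_and_or.mp h1 with h | h
      · have hθν : θ = starT astar := by
          rcases Finset.mem_insert.mp (hs hθ) with h' | h'
          · exact h'
          · exact absurd h' h
        have hns : ¬(θ' ∈ c.supp ∧ θ ∈ c.supp) := fun hc => h hc.2
        rw [if_neg h1, if_pos hθν, if_neg hns]
        by_cases h2 : θ' = starT astar
        · rw [if_pos h2, hθν, h2]
          exact NE_star_star astar
        · rw [if_neg h2, hθν]
          exact NE_star_fst astar θ'.1
      · have hθ'ν : θ' = starT astar := by
          rcases Finset.mem_insert.mp (hs hθ') with h' | h'
          · exact h'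
          · exact absurd h' h
        have hns : ¬(θ' ∈ c.supp ∧ θ ∈ c.supp) := fun hc => h hc.1
        by_cases h2 : θ = starT astar
        · rw [if_neg h1, if_pos h2, if_neg hns, if_pos hθ'ν, h2, hθ'ν]
          exact NE_star_star astar
        · rw [if_neg h1, if_neg h2, if_neg hns, if_pos hθ'ν, hθ'ν]
          exact NE_star_snd astar θ.1
  bD_mem := by
    intro θ hθ θ' hθ' hlt
    by_cases h1 : θ ∈ c.supp ∧ θ' ∈ c.supp
    · rw [if_pos h1, if_pos ⟨h1.2, h1.1⟩]
      exact c.bD_mem θ h1.1 θ' h1.2 hlt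
    · rcases not_and_or.mp h1 with h | h
      · have hθν : θ = starT astar := by
          rcases Finset.mem_insert.mp (hs hθ) with h' | h'
          · exact h'
          · exact absurd h' h
        rw [hθν] at hlt
        exact absurd hlt (not_lt.mpr θ'.2.one_le)
      · have hθ'ν : θ' = starT astar := by
          rcases Finset.mem_insert.mp (hs hθ') with h' | h'
          · exact h'
          · exact absurd h' h
        have h2 : θ ≠ starT astar := by
          intro hc; rw [hc, hθ'ν] at hlt; exact lt_irrefl _ hlt
        have hns : ¬(θ' ∈ c.supp ∧ θ ∈ c.supp) := fun hc => h hc.1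
        rw [if_neg h1, if_neg h2, if_neg hns, if_pos hθ'ν, hθ'ν]
        exact DE_star astar θ.1

lemma extCfg_dist [Nonempty A] {M : Model A} (c : Config M) (astar : A)
    (d : TypeDist A) (hs : d.w.support ⊆ insert (starT astar) c.supp) :
    (extCfg c astar d hs).dist = d := rfl

lemma extCfg_supp [Nonempty A] {M : Model A} (c : Config M) (astar : A)
    (d : TypeDist A) (hs : d.w.support ⊆ insert (starT astar) c.supp) :
    (extCfg c astar d hs).supp = d.w.support := rfl

lemma extCfg_bN [Nonempty A] {M : Model A} (c : Config M) (astar : A)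
    (d : TypeDist A) (hs : d.w.support ⊆ insert (starT astar) c.supp)
    (θ θ' : GType A) (hθ : θ ∈ c.supp) (hθ' : θ' ∈ c.supp) :
    (extCfg c astar d hs).bN θ θ' = c.bN θ θ' := by
  show (if θ ∈ c.supp ∧ θ' ∈ c.supp then c.bN θ θ' else _) = c.bN θ θ'
  rw [if_pos ⟨hθ, hθ'⟩]

lemma extCfg_bD [Nonempty A] {M : Model A} (c : Config M) (astar : A)
    (d : TypeDist A) (hs : d.w.support ⊆ insert (starT astar) c.supp)
    (θ θ' : GType A) (hθ : θ ∈ c.supp) (hθ' : θ' ∈ c.supp) :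
    (extCfg c astar d hs).bD θ θ' = c.bD θ θ' := by
  show (if θ ∈ c.supp ∧ θ' ∈ c.supp then c.bD θ θ' else _) = c.bD θ θ'
  rw [if_pos ⟨hθ, hθ'⟩]

end Stmt9Aux

/-- The pure maxmin value is a lower bound on the average fitness
in any NSC. -/
theorem stmt9 [Nonempty A] (hA : 3 ≤ Fintype.card A) (M : Model A)
    (c : Config M) (hNSC : IsNSC c) :
    maxminVal M ≤ avgFit c := by
  by_contra hcon
  push_neg at hcon
  obtain ⟨astar, hg⟩ := exists_maxmin_act M
  have hνw_nonneg : ∀ θ, 0 ≤ (Finsupp.single (starT astar) (1:ℝ)) θ := by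
    intro θ; rw [Finsupp.single_apply]; split <;> norm_num
  have hνw_total : ∑ θ ∈ (Finsupp.single (starT astar) (1:ℝ)).support,
      (Finsupp.single (starT astar) (1:ℝ)) θ = 1 := by
    rw [Finsupp.support_single_ne_zero _ one_ne_zero, Finset.sum_singleton,
      Finsupp.single_eq_same]
  obtain ⟨εb, hεb, H⟩ := hNSC ⟨Finsupp.single (starT astar) 1, hνw_nonneg, hνw_total⟩
  have hmixsub : ∀ ε : ℝ,
      ((1 - ε) • c.dist.w + ε • Finsupp.single (starT astar) (1:ℝ)).support
        ⊆ insert (starT astar) c.supp := by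
    intro ε θ hθ
    rcases Finset.mem_union.mp (Finsupp.support_add hθ) with h | h
    · exact Finset.mem_insert_of_mem (Finsupp.support_smul h)
    · have h2 := Finsupp.support_smul h
      rw [Finsupp.support_single_ne_zero _ one_ne_zero] at h2
      rw [Finset.mem_singleton.mp h2]
      exact Finset.mem_insert_self _ _
  have hmixtot : ∀ ε : ℝ,
      ∑ θ ∈ ((1 - ε) • c.dist.w + ε • Finsupp.single (starT astar) (1:ℝ)).support,
        ((1 - ε) • c.dist.w + ε • Finsupp.single (starT astar) (1:ℝ)) θ = 1 := by
    intro ε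
    have t1 := sum_mix (1 - ε) ε c.dist.w (Finsupp.single (starT astar) 1)
      (fun _ => (1:ℝ))
    simp only [mul_one] at t1
    rw [t1, c.dist.total, hνw_total]; ring
  have hmix_nonneg : ∀ ε : ℝ, 0 ≤ ε → ε ≤ 1 → ∀ θ,
      0 ≤ ((1 - ε) • c.dist.w + ε • Finsupp.single (starT astar) (1:ℝ)) θ := by
    intro ε h0 h1 θ
    rw [Finsupp.add_apply, Finsupp.smul_apply, Finsupp.smul_apply, smul_eq_mul, smul_eq_mul]
    have h2 := c.dist.nonneg θ
    have h3 := hνw_nonneg θ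
    nlinarith
  have hε0 : εb / 2 ∈ Set.Ioo (0:ℝ) εb := ⟨by linarith [hεb.1], by linarith [hεb.1]⟩
  have hε01 : εb / 2 < 1 := by
    have := hεb.2; have := hεb.1; linarith
  set mixD : TypeDist A := ⟨(1 - εb / 2) • c.dist.w + (εb / 2) • Finsupp.single (starT astar) 1,
    hmix_nonneg (εb / 2) (le_of_lt hε0.1) (le_of_lt hε01), hmixtot (εb / 2)⟩ with hmixD
  set ct := extCfg c astar mixD (hmixsub (εb / 2)) with hct
  have hsupp_c : c.supp ⊆ ct.supp := by
    intro θ hθ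
    have hw : 0 < c.dist.w θ :=
      lt_of_le_of_ne (c.dist.nonneg θ) (Ne.symm (Finsupp.mem_support_iff.mp hθ))
    rw [hct, extCfg_supp]
    rw [Finsupp.mem_support_iff]
    show ((1 - εb / 2) • c.dist.w + (εb / 2) • Finsupp.single (starT astar) 1 :
      GType A →₀ ℝ) θ ≠ 0
    rw [Finsupp.add_apply, Finsupp.smul_apply, Finsupp.smul_apply, smul_eq_mul, smul_eq_mul]
    have h3 := hνw_nonneg θ
    have h4 := hε0.1
    nlinarith
  have hν_supp : starT astar ∈ ct.supp := by
    rw [hct, extCfg_supp]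
    rw [Finsupp.mem_support_iff]
    show ((1 - εb / 2) • c.dist.w + (εb / 2) • Finsupp.single (starT astar) 1 :
      GType A →₀ ℝ) (starT astar) ≠ 0
    rw [Finsupp.add_apply, Finsupp.smul_apply, Finsupp.smul_apply, smul_eq_mul, smul_eq_mul,
      Finsupp.single_eq_same]
    have h2 := c.dist.nonneg (starT astar)
    have h4 := hε0.1
    nlinarith
  have hfocal : Focal c ct := by
    refine ⟨hsupp_c, ?_⟩
    intro θ hθ θ' hθ'
    rw [hct]
    exact ⟨extCfg_bN c astar mixD _ θ θ' hθ hθ', extCfg_bD c astar mixD _ θ θ' hθ hθ'⟩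
  have hNSS : IsNSSOn (typePay ct) ct.supp c.dist := by
    refine H (εb / 2) hε0 ct hfocal ?_
    rw [hct, extCfg_dist]
  obtain ⟨εb2, hεb2, K⟩ := hNSS ⟨Finsupp.single (starT astar) 1, hνw_nonneg, hνw_total⟩
    (by
      intro θ hθ
      rw [Finsupp.support_single_ne_zero _ one_ne_zero] at hθ
      rw [Finset.mem_singleton.mp hθ]
      exact hν_supp)
  have havg : playT (typePay ct) c.dist.w c.dist.w = avgFit c := by
    rw [← playT_self_eq_avgFit c]
    unfold playT
    apply Finset.sum_congr rfl; intro θ hθ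
    apply Finset.sum_congr rfl; intro θ' hθ'
    have h1 := hfocal.2 θ hθ θ' hθ'
    have h2 := hfocal.2 θ' hθ' θ hθ
    unfold typePay condFit
    rw [h1.1, h1.2, h2.1, h2.2]
  have key : ∀ ε ∈ Set.Ioo (0:ℝ) εb2, maxminVal M ≤ (1 - ε) * avgFit c
      + ε * playT (typePay ct) c.dist.w (Finsupp.single (starT astar) 1) := by
    intro ε hε
    have hK := K ε hε
    have hε1 : ε ≤ 1 := le_of_lt (hε.2.trans hεb2.2)
    have hlow : maxminVal M ≤ playT (typePay ct)
        (Finsupp.single (starT astar) 1)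
        ((1 - ε) • c.dist.w + ε • Finsupp.single (starT astar) 1) := by
      rw [playT_single_left]
      have htot := hmixtot ε
      have hnn := hmix_nonneg ε (le_of_lt hε.1) hε1
      calc maxminVal M
          = (∑ θ' ∈ ((1 - ε) • c.dist.w + ε • Finsupp.single (starT astar) (1:ℝ)).support,
              ((1 - ε) • c.dist.w + ε • Finsupp.single (starT astar) (1:ℝ)) θ')
            * maxminVal M := by rw [htot, one_mul]
        _ = ∑ θ' ∈ ((1 - ε) • c.dist.w + ε • Finsupp.single (starT astar) (1:ℝ)).support,
              ((1 - ε) • c.dist.w + ε • Finsupp.single (starT astar) (1:ℝ)) θ'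
            * maxminVal M := by rw [Finset.sum_mul]
        _ ≤ ∑ θ' ∈ ((1 - ε) • c.dist.w + ε • Finsupp.single (starT astar) (1:ℝ)).support,
              ((1 - ε) • c.dist.w + ε • Finsupp.single (starT astar) (1:ℝ)) θ'
            * typePay ct (starT astar) θ' := by
            apply Finset.sum_le_sum
            intro θ' hθ'
            apply mul_le_mul_of_nonneg_left _ (hnn θ')
            have hmem : θ' ∈ ct.supp := by
              rcases Finset.mem_insert.mp (hmixsub ε hθ') with h | h
              · rw [h]; exact hν_supp
              · exact hsupp_c h
            have hcf := mutant_condFit_ge ct astar hg hν_supp hmem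
            show maxminVal M ≤ condFit ct (starT astar) θ' - M.k (starT astar).2
            have hk1 : M.k (starT astar).2 = 0 := M.k_one
            rw [hk1, sub_zero]
            exact hcf
    have hup : playT (typePay ct) c.dist.w
        ((1 - ε) • c.dist.w + ε • Finsupp.single (starT astar) 1)
        = (1 - ε) * avgFit c
          + ε * playT (typePay ct) c.dist.w (Finsupp.single (starT astar) 1) := by
      rw [playT_right_mix, havg]
    calc maxminVal M ≤ _ := hlow
      _ ≤ _ := hK
      _ = _ := hup
  set R := playT (typePay ct) c.dist.w (Finsupp.single (starT astar) 1) with hRdef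
  set m := maxminVal M with hmdef
  set avg := avgFit c with havgdef
  have hδ : 0 < m - avg := by linarith
  have habs : 0 < |R - avg| + 1 := by positivity
  set ε := min (εb2 / 2) ((m - avg) / (2 * (|R - avg| + 1))) with hεdef
  have hεpos : 0 < ε := lt_min (by linarith [hεb2.1]) (by positivity)
  have hεlt : ε < εb2 := lt_of_le_of_lt (min_le_left _ _) (by linarith [hεb2.1])
  have hk := key ε ⟨hεpos, hεlt⟩
  have h1 : ε * (R - avg) ≤ ε * |R - avg| :=
    mul_le_mul_of_nonneg_left (le_abs_self _) (le_of_lt hεpos)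
  have h2 : ε * |R - avg| ≤ ((m - avg) / (2 * (|R - avg| + 1))) * (|R - avg| + 1) := by
    apply mul_le_mul (min_le_right _ _) (by linarith) (abs_nonneg _) (by positivity)
  have h3 : ((m - avg) / (2 * (|R - avg| + 1))) * (|R - avg| + 1) = (m - avg) / 2 := by
    field_simp
  nlinarith [hk, h1, h2, h3, hδ]
end
end

section
/- In the Rock-Paper-Scissors game with q(n,n')=1 whenever n>n', k_2=1 and k_3>2, for each ε∈(0,1) the following is a neutrally stable configuration in which every incumbent's expected fitness equals ε−1: the type distribution puts probability ε on (u^π,1) and 1−ε on (u^π,2), where u^π=π; when a level-2 incumbent meets a level-1 incumbent they play the deception equilibrium in which the level-1 agent plays Rock and the level-2 agent plays Paper (the deceiver earns 1, the deceived earns −1); when two incumbents of the same cognitive level meet they both play the uniform mixed strategy over {R,P,S}. -/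
open scoped Classical
set_option maxHeartbeats 1000000

noncomputable section

variable {A : Type} [Fintype A]

/-- Rock-Paper-Scissors payoffs, with `R = 0`, `P = 1`, `S = 2`. -/
def rps : Fin 3 → Fin 3 → ℝ := fun a a' =>
  if a = a' then 0 else if a = a' + 1 then 1 else -1

/-- The uniform mixed strategy. -/
def uniformStrat (A : Type) [Fintype A] [Nonempty A] : Mixed A :=
  ⟨fun _ => (Fintype.card A : ℝ)⁻¹, by
    have h0 : (0:ℝ) < (Fintype.card A : ℝ) := by exact_mod_cast Fintype.card_pos
    refine ⟨fun _ => by positivity, ?_⟩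
    rw [Finset.sum_const, Finset.card_univ, nsmul_eq_mul, mul_inv_cancel₀ (ne_of_gt h0)]⟩

section Aux

lemma rps_anti (a a' : Fin 3) : rps a a' = - rps a' a := by
  fin_cases a <;> fin_cases a' <;> norm_num [rps, Fin.ext_iff, Fin.add_def]

lemma rps_le_one (a a' : Fin 3) : rps a a' ≤ 1 := by
  fin_cases a <;> fin_cases a' <;> norm_num [rps, Fin.ext_iff, Fin.add_def]

lemma rps_succ (a : Fin 3) : rps (a + 1) a = 1 := by
  fin_cases a <;> norm_num [rps, Fin.ext_iff, Fin.add_def]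

lemma rps_col_sum (a' : Fin 3) : ∑ a, rps a a' = 0 := by
  rw [Fin.sum_univ_three]
  fin_cases a' <;> norm_num [rps, Fin.ext_iff, Fin.add_def]

lemma exPay_pure (f : Fin 3 → Fin 3 → ℝ) (a b : Fin 3) :
    exPay f (pureStrat a) (pureStrat b) = f a b := by
  simp [exPay, pureStrat, ite_mul, mul_ite, Finset.sum_ite_eq']

lemma exPay_anti (σ σ' : Mixed (Fin 3)) : exPay rps σ σ' = - exPay rps σ' σ := by
  rw [exPay, exPay, Finset.sum_comm, ← Finset.sum_neg_distrib]
  refine Finset.sum_congr rfl fun a _ => ?_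
  rw [← Finset.sum_neg_distrib]
  refine Finset.sum_congr rfl fun a' _ => ?_
  rw [rps_anti a' a]; ring

lemma exPay_uniform_right (σ : Mixed (Fin 3)) :
    exPay rps (uniformStrat (Fin 3)) σ = 0 := by
  rw [exPay, Finset.sum_comm]
  refine Finset.sum_eq_zero fun a' _ => ?_
  have h : ∑ a, (uniformStrat (Fin 3)).1 a * σ.1 a' * rps a a'
      = ((3:ℝ)⁻¹ * σ.1 a') * ∑ a, rps a a' := by
    rw [Finset.mul_sum]
    refine Finset.sum_congr rfl fun a _ => ?_
    have : (uniformStrat (Fin 3)).1 a = (3:ℝ)⁻¹ := by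
      simp [uniformStrat]
    rw [this]; try ring
  rw [h, rps_col_sum, mul_zero]

lemma exPay_le_one (σ σ' : Mixed (Fin 3)) : exPay rps σ σ' ≤ 1 := by
  have h : exPay rps σ σ' ≤ ∑ a, ∑ a', σ.1 a * σ'.1 a' := by
    refine Finset.sum_le_sum fun a _ => Finset.sum_le_sum fun a' _ => ?_
    have h1 := σ.2.1 a; have h2 := σ'.2.1 a'
    have h3 := mul_le_mul_of_nonneg_left (rps_le_one a a') (mul_nonneg h1 h2)
    linarith
  have h2 : ∑ a, ∑ a', σ.1 a * σ'.1 a' = 1 := by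
    rw [← Finset.sum_mul_sum, σ.2.2, σ'.2.2, one_mul]
  linarith

end Aux
section Aux2

lemma exPay_pure_left_s10 (u : Fin 3 → Fin 3 → ℝ) (b : Fin 3) (σ' : Mixed (Fin 3)) :
    exPay u (pureStrat b) σ' = ∑ a', σ'.1 a' * u b a' := by
  rw [exPay]
  rw [Finset.sum_eq_single b]
  · refine Finset.sum_congr rfl fun a' _ => ?_
    simp [pureStrat]
  · intro c _ hc
    refine Finset.sum_eq_zero fun a' _ => ?_
    simp [pureStrat, hc]
  · simp

lemma exPay_expand (u : Fin 3 → Fin 3 → ℝ) (τ σ' : Mixed (Fin 3)) :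
    exPay u τ σ' = ∑ b, τ.1 b * exPay u (pureStrat b) σ' := by
  rw [exPay]
  refine Finset.sum_congr rfl fun b _ => ?_
  rw [exPay_pure_left_s10, Finset.mul_sum]
  refine Finset.sum_congr rfl fun a' _ => ?_
  ring

lemma exists_pure_undom (u : Fin 3 → Fin 3 → ℝ) : ∃ a, pureStrat a ∈ Undom u := by
  obtain ⟨a, -, ha⟩ := Finset.exists_max_image (Finset.univ : Finset (Fin 3))
    (fun b => exPay u (pureStrat b) (uniformStrat (Fin 3))) ⟨0, Finset.mem_univ 0⟩
  refine ⟨a, uniformStrat (Fin 3), fun τ => ?_⟩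
  rw [exPay_expand u τ]
  calc ∑ b, τ.1 b * exPay u (pureStrat b) (uniformStrat (Fin 3))
      ≤ ∑ b, τ.1 b * exPay u (pureStrat a) (uniformStrat (Fin 3)) := by
        refine Finset.sum_le_sum fun b _ => ?_
        exact mul_le_mul_of_nonneg_left (ha b (Finset.mem_univ b)) (τ.2.1 b)
    _ = exPay u (pureStrat a) (uniformStrat (Fin 3)) := by
        rw [← Finset.sum_mul, τ.2.2, one_mul]

lemma DE_fst {u' : Fin 3 → Fin 3 → ℝ} {p : Mixed (Fin 3) × Mixed (Fin 3)}
    (hp : p ∈ DE rps u') : exPay rps p.1 p.2 = 1 := by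
  obtain ⟨a, ha⟩ := exists_pure_undom u'
  refine le_antisymm (exPay_le_one _ _) ?_
  have := hp.2 (pureStrat (a + 1)) (pureStrat a) ha
  rwa [exPay_pure, rps_succ] at this

lemma DE_snd {u' : Fin 3 → Fin 3 → ℝ} {p : Mixed (Fin 3) × Mixed (Fin 3)}
    (hp : p ∈ DE rps u') : exPay rps p.2 p.1 = -1 := by
  rw [exPay_anti, DE_fst hp]

lemma BR_le_zero {σ σ' : Mixed (Fin 3)} (h : σ' ∈ BR rps σ) :
    exPay rps σ σ' ≤ 0 := by
  have h1 := h (uniformStrat (Fin 3))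
  rw [exPay_uniform_right] at h1
  rw [exPay_anti]
  linarith

end Aux2
section Aux3

lemma q_zero (M : Model (Fin 3)) {n n' : ℕ+} (h : ¬ n' < n) : M.q n n' = 0 := by
  have h2 := (M.q_pos_iff n n').not
  have h3 := M.q_nonneg n n'
  rcases lt_or_eq_of_le h3 with h4 | h4
  · exact absurd ((M.q_pos_iff n n').1 h4) h
  · exact h4.symm

lemma condFit_anti {M : Model (Fin 3)} (hpi : M.π = rps) (c : Config M)
    (θ θ' : GType (Fin 3)) : condFit c θ θ' + condFit c θ' θ = 0 := by
  rw [condFit, condFit, hpi,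
    exPay_anti (c.bD θ θ') (c.bD θ' θ), exPay_anti (c.bN θ θ') (c.bN θ' θ)]
  ring

lemma key_bound (M : Model (Fin 3)) (hpi : M.π = rps)
    (hq : ∀ n n' : ℕ+, n' < n → M.q n n' = 1)
    (hk2 : M.k 2 = 1) (hk3 : 2 < M.k 3)
    (ε : ℝ) (hε : ε ∈ Set.Ioo (0:ℝ) 1) (ct : Config M)
    (h1 : ((rps, 1) : GType (Fin 3)) ∈ ct.supp)
    (h2 : ((rps, 2) : GType (Fin 3)) ∈ ct.supp)
    (θ : GType (Fin 3)) (hθ : θ ∈ ct.supp) :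
    ε * condFit ct θ (rps, 1) + (1 - ε) * condFit ct θ (rps, 2) - M.k θ.2 ≤ ε - 1 := by
  obtain ⟨hε0, hε1⟩ := hε
  rcases eq_or_ne θ.2 1 with hn | hn1
  · -- level 1
    have e1 : condFit ct θ ((rps, 2) : GType (Fin 3)) = -1 := by
      have hde := ct.bD_mem ((rps, 2) : GType (Fin 3)) h2 θ hθ (by rw [hn]; decide)
      have hde' : (ct.bD ((rps, 2) : GType (Fin 3)) θ, ct.bD θ ((rps, 2) : GType (Fin 3))) ∈ DE rps θ.1 := by
        rw [← hpi] at hde ⊢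
        exact hde
      have := DE_snd hde'
      rw [condFit, hn, hpi, q_zero M (show ¬ (2:ℕ+) < 1 by decide),
        hq 2 1 (by decide), this]
      ring
    have e2 : condFit ct θ ((rps, 1) : GType (Fin 3)) ≤ 0 := by
      have hne := ct.bN_mem θ hθ ((rps, 1) : GType (Fin 3)) h1
        (by rw [hn, q_zero M (show ¬ (1:ℕ+) < 1 by decide)]; norm_num)
      have hbr : ct.bN ((rps, 1) : GType (Fin 3)) θ ∈ BR rps (ct.bN θ ((rps, 1) : GType (Fin 3))) := by
        have := hne.2; simpa using this
      have hle := BR_le_zero hbr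
      rw [condFit, hn, hpi, q_zero M (show ¬ (1:ℕ+) < 1 by decide)]
      linarith
    rw [hn, M.k_one]
    nlinarith
  rcases eq_or_ne θ.2 2 with hn | hn2
  · -- level 2
    have e1 : condFit ct θ ((rps, 1) : GType (Fin 3)) ≤ 1 := by
      rw [condFit, hn, hpi, q_zero M (show ¬ (2:ℕ+) < 1 by decide),
        hq 2 1 (by decide)]
      have := exPay_le_one (ct.bD θ ((rps, 1) : GType (Fin 3)))
        (ct.bD ((rps, 1) : GType (Fin 3)) θ)
      linarith
    have e2 : condFit ct θ ((rps, 2) : GType (Fin 3)) ≤ 0 := by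
      have hne := ct.bN_mem θ hθ ((rps, 2) : GType (Fin 3)) h2
        (by rw [hn, q_zero M (show ¬ (2:ℕ+) < 2 by decide)]; norm_num)
      have hbr : ct.bN ((rps, 2) : GType (Fin 3)) θ ∈ BR rps (ct.bN θ ((rps, 2) : GType (Fin 3))) := by
        have := hne.2; simpa using this
      have hle := BR_le_zero hbr
      rw [condFit, hn, hpi, q_zero M (show ¬ (2:ℕ+) < 2 by decide)]
      linarith
    rw [hn, hk2]
    nlinarith
  · -- level ≥ 3
    have h3 : (3:ℕ+) ≤ θ.2 := by
      have e1 : ((θ.2 : ℕ+) : ℕ) ≠ 1 := fun h => hn1 (PNat.coe_injective (by simpa using h))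
      have e2 : ((θ.2 : ℕ+) : ℕ) ≠ 2 := fun h => hn2 (PNat.coe_injective (by simpa using h))
      have e3 := θ.2.one_le
      have : (3:ℕ) ≤ ((θ.2 : ℕ+) : ℕ) := by
        have := θ.2.pos; omega
      exact_mod_cast this
    have hgt1 : (1:ℕ+) < θ.2 := lt_of_lt_of_le (by decide) h3
    have hgt2 : (2:ℕ+) < θ.2 := lt_of_lt_of_le (by decide) h3
    have e1 : condFit ct θ ((rps, 1) : GType (Fin 3)) ≤ 1 := by
      rw [condFit, hpi, q_zero M (not_lt.2 hgt1.le), hq _ 1 hgt1]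
      have := exPay_le_one (ct.bD θ ((rps, 1) : GType (Fin 3)))
        (ct.bD ((rps, 1) : GType (Fin 3)) θ)
      linarith
    have e2 : condFit ct θ ((rps, 2) : GType (Fin 3)) ≤ 1 := by
      rw [condFit, hpi, q_zero M (not_lt.2 hgt2.le), hq _ 2 hgt2]
      have := exPay_le_one (ct.bD θ ((rps, 2) : GType (Fin 3)))
        (ct.bD ((rps, 2) : GType (Fin 3)) θ)
      linarith
    have hk : 2 < M.k θ.2 := lt_of_lt_of_le hk3 (M.k_mono.monotone h3)
    nlinarith

end Aux3
section Aux4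

lemma ne12 : ((rps, 1) : GType (Fin 3)) ≠ ((rps, 2) : GType (Fin 3)) := by
  intro h
  have := congrArg Prod.snd h
  simp only at this
  exact absurd this (by decide)

lemma nss_key (M : Model (Fin 3)) (hpi : M.π = rps)
    (hq : ∀ n n' : ℕ+, n' < n → M.q n n' = 1)
    (hk2 : M.k 2 = 1) (hk3 : 2 < M.k 3)
    (ε : ℝ) (hε : ε ∈ Set.Ioo (0:ℝ) 1) (ct : Config M)
    (h1 : ((rps, 1) : GType (Fin 3)) ∈ ct.supp)
    (h2 : ((rps, 2) : GType (Fin 3)) ∈ ct.supp)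
    (μ ν : TypeDist (Fin 3))
    (hμd : μ.w = Finsupp.single ((rps, 1) : GType (Fin 3)) ε
          + Finsupp.single ((rps, 2) : GType (Fin 3)) (1 - ε))
    (hμs : μ.w.support ⊆ ct.supp) (hνs : ν.w.support ⊆ ct.supp) (t : ℝ) :
    playT (typePay ct) ν.w ((1 - t) • μ.w + t • ν.w)
      ≤ playT (typePay ct) μ.w ((1 - t) • μ.w + t • ν.w) := by
  set S := ct.supp with hS
  set y : GType (Fin 3) →₀ ℝ := (1 - t) • μ.w + t • ν.w with hy
  have hys : y.support ⊆ S := by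
    refine subset_trans Finsupp.support_add ?_
    refine Finset.union_subset (subset_trans (Finsupp.support_smul) hμs)
      (subset_trans (Finsupp.support_smul) hνs)
  have hyval : ∀ θ, y θ = (1 - t) * μ.w θ + t * ν.w θ := by
    intro θ; simp [hy]
  -- totals
  have hμtot : ∑ θ ∈ S, μ.w θ = 1 := by
    rw [← Finset.sum_subset hμs (fun θ _ h => Finsupp.notMem_support_iff.1 h)]
    exact μ.total
  have hνtot : ∑ θ ∈ S, ν.w θ = 1 := by
    rw [← Finset.sum_subset hνs (fun θ _ h => Finsupp.notMem_support_iff.1 h)]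
    exact ν.total
  have hytot : ∑ θ ∈ S, y θ = 1 := by
    have : ∑ θ ∈ S, y θ = (1 - t) * ∑ θ ∈ S, μ.w θ + t * ∑ θ ∈ S, ν.w θ := by
      rw [Finset.mul_sum, Finset.mul_sum, ← Finset.sum_add_distrib]
      exact Finset.sum_congr rfl fun θ _ => hyval θ
    rw [this, hμtot, hνtot]; ring
  -- expansion of playT
  have hplay : ∀ x : GType (Fin 3) →₀ ℝ, x.support ⊆ S →
      playT (typePay ct) x y
        = (1 - t) * (∑ θ ∈ S, ∑ θ' ∈ S, x θ * μ.w θ' * condFit ct θ θ')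
          + t * (∑ θ ∈ S, ∑ θ' ∈ S, x θ * ν.w θ' * condFit ct θ θ')
          - ∑ θ ∈ S, x θ * M.k θ.2 := by
    intro x hx
    have step1 : playT (typePay ct) x y
        = ∑ θ ∈ S, ∑ θ' ∈ S, x θ * y θ' * typePay ct θ θ' := by
      rw [playT]
      rw [Finset.sum_subset hx (fun θ _ h => Finset.sum_eq_zero fun θ' _ => by
        rw [Finsupp.notMem_support_iff.1 h]; ring)]
      exact Finset.sum_congr rfl fun θ _ => Finset.sum_subset hys
        (fun θ' _ h => by rw [Finsupp.notMem_support_iff.1 h]; ring)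
    rw [step1]
    have step2 : ∀ θ ∈ S, ∑ θ' ∈ S, x θ * y θ' * typePay ct θ θ'
        = (1 - t) * (∑ θ' ∈ S, x θ * μ.w θ' * condFit ct θ θ')
          + t * (∑ θ' ∈ S, x θ * ν.w θ' * condFit ct θ θ')
          - x θ * M.k θ.2 := by
      intro θ _
      have e1 : ∀ θ' ∈ S, x θ * y θ' * typePay ct θ θ'
          = ((1 - t) * (x θ * μ.w θ' * condFit ct θ θ')
            + t * (x θ * ν.w θ' * condFit ct θ θ'))
            - (x θ * M.k θ.2) * y θ' := by
        intro θ' _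
        rw [hyval θ', typePay]
        ring
      rw [Finset.sum_congr rfl e1, Finset.sum_sub_distrib, ← Finset.mul_sum, hytot,
        Finset.sum_add_distrib, ← Finset.mul_sum, ← Finset.mul_sum]
      ring
    rw [Finset.sum_congr rfl step2, Finset.sum_sub_distrib, Finset.sum_add_distrib,
      ← Finset.mul_sum, ← Finset.mul_sum]
  -- antisymmetry: the RPS part is zero-sum
  have hzero : ∀ x : GType (Fin 3) →₀ ℝ,
      ∑ θ ∈ S, ∑ θ' ∈ S, x θ * x θ' * condFit ct θ θ' = 0 := by
    intro x
    have e2 : ∑ θ ∈ S, ∑ θ' ∈ S,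
        (x θ * x θ' * condFit ct θ θ' + x θ' * x θ * condFit ct θ' θ) = 0 :=
      Finset.sum_eq_zero fun θ _ => Finset.sum_eq_zero fun θ' _ => by
        have h := condFit_anti hpi ct θ θ'
        linear_combination (x θ * x θ') * h
    have e3 : ∑ θ ∈ S, ∑ θ' ∈ S, x θ' * x θ * condFit ct θ' θ
        = ∑ θ ∈ S, ∑ θ' ∈ S, x θ * x θ' * condFit ct θ θ' := Finset.sum_comm
    simp only [Finset.sum_add_distrib] at e2
    rw [e3] at e2
    linarith
  have hanti : ∑ θ ∈ S, ∑ θ' ∈ S, μ.w θ * ν.w θ' * condFit ct θ θ'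
      = - ∑ θ ∈ S, ∑ θ' ∈ S, ν.w θ * μ.w θ' * condFit ct θ θ' := by
    have e2 : ∑ θ ∈ S, ∑ θ' ∈ S,
        (μ.w θ * ν.w θ' * condFit ct θ θ' + ν.w θ' * μ.w θ * condFit ct θ' θ) = 0 :=
      Finset.sum_eq_zero fun θ _ => Finset.sum_eq_zero fun θ' _ => by
        have h := condFit_anti hpi ct θ θ'
        linear_combination (μ.w θ * ν.w θ') * h
    have e3 : ∑ θ ∈ S, ∑ θ' ∈ S, ν.w θ' * μ.w θ * condFit ct θ' θ
        = ∑ θ ∈ S, ∑ θ' ∈ S, ν.w θ * μ.w θ' * condFit ct θ θ' := Finset.sum_comm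
    simp only [Finset.sum_add_distrib] at e2
    rw [e3] at e2
    linarith
  -- μ weights
  have hsub : ({((rps, 1) : GType (Fin 3)), ((rps, 2) : GType (Fin 3))} : Finset (GType (Fin 3))) ⊆ S := by
    rw [Finset.insert_subset_iff, Finset.singleton_subset_iff]
    exact ⟨h1, h2⟩
  have hμ0 : ∀ θ : GType (Fin 3), θ ≠ ((rps, 1) : GType (Fin 3)) →
      θ ≠ ((rps, 2) : GType (Fin 3)) → μ.w θ = 0 := by
    intro θ ha hb
    rw [hμd]
    simp [Finsupp.single_apply, Ne.symm ha, Ne.symm hb]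
  have hμ1 : μ.w ((rps, 1) : GType (Fin 3)) = ε := by
    rw [hμd]; simp [Finsupp.single_apply, Ne.symm ne12]
  have hμ2 : μ.w ((rps, 2) : GType (Fin 3)) = 1 - ε := by
    rw [hμd]; simp [Finsupp.single_apply, ne12]
  have hpairsum : ∀ f : GType (Fin 3) → ℝ,
      ∑ θ' ∈ S, μ.w θ' * f θ'
        = ε * f ((rps, 1) : GType (Fin 3)) + (1 - ε) * f ((rps, 2) : GType (Fin 3)) := by
    intro f
    rw [← Finset.sum_subset hsub (fun θ _ h => by
      simp only [Finset.mem_insert, Finset.mem_singleton] at h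
      push_neg at h
      rw [hμ0 θ h.1 h.2]; ring)]
    rw [Finset.sum_pair ne12, hμ1, hμ2]
  -- the key bound
  have hKμ : ∑ θ ∈ S, μ.w θ * M.k θ.2 = 1 - ε := by
    rw [hpairsum (fun θ => M.k θ.2)]
    simp only
    rw [M.k_one, hk2]
    ring
  have hbound : ∑ θ ∈ S, ∑ θ' ∈ S, ν.w θ * μ.w θ' * condFit ct θ θ'
      - ∑ θ ∈ S, ν.w θ * M.k θ.2 ≤ ε - 1 := by
    have e1 : ∑ θ ∈ S, ∑ θ' ∈ S, ν.w θ * μ.w θ' * condFit ct θ θ'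
        - ∑ θ ∈ S, ν.w θ * M.k θ.2
        = ∑ θ ∈ S, ν.w θ * (ε * condFit ct θ ((rps, 1) : GType (Fin 3))
            + (1 - ε) * condFit ct θ ((rps, 2) : GType (Fin 3)) - M.k θ.2) := by
      rw [← Finset.sum_sub_distrib]
      refine Finset.sum_congr rfl fun θ hθ => ?_
      have e2 : ∑ θ' ∈ S, ν.w θ * μ.w θ' * condFit ct θ θ'
          = ν.w θ * ∑ θ' ∈ S, μ.w θ' * condFit ct θ θ' := by
        rw [Finset.mul_sum]
        exact Finset.sum_congr rfl fun θ' _ => by ring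
      rw [e2, hpairsum (fun θ' => condFit ct θ θ')]
      ring
    rw [e1]
    calc ∑ θ ∈ S, ν.w θ * (ε * condFit ct θ ((rps, 1) : GType (Fin 3))
            + (1 - ε) * condFit ct θ ((rps, 2) : GType (Fin 3)) - M.k θ.2)
        ≤ ∑ θ ∈ S, ν.w θ * (ε - 1) := by
          refine Finset.sum_le_sum fun θ hθ => ?_
          exact mul_le_mul_of_nonneg_left
            (key_bound M hpi hq hk2 hk3 ε hε ct h1 h2 θ hθ) (ν.nonneg θ)
      _ = ε - 1 := by rw [← Finset.sum_mul, hνtot, one_mul]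
  rw [hplay ν.w hνs, hplay μ.w hμs, hzero ν.w, hzero μ.w, hanti]
  linarith
end Aux4
section Aux5

lemma exPay_uniform_left' (σ : Mixed (Fin 3)) :
    exPay rps σ (uniformStrat (Fin 3)) = 0 := by
  rw [exPay_anti, exPay_uniform_right, neg_zero]

lemma uniform_NE : (uniformStrat (Fin 3), uniformStrat (Fin 3)) ∈ NE rps rps := by
  constructor <;>
  · intro τ
    rw [exPay_uniform_left', exPay_uniform_left']

lemma rps01 : rps 0 1 = -1 := by norm_num [rps, Fin.ext_iff, Fin.add_def]
lemma rps10 : rps 1 0 = 1 := by norm_num [rps, Fin.ext_iff, Fin.add_def]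
lemma rps02 : rps 0 2 = 1 := by
  simp [rps, show ((2:Fin 3)) + 1 = 0 from by decide, Fin.ext_iff]

lemma rock_undom : pureStrat (0 : Fin 3) ∈ Undom rps := by
  refine ⟨pureStrat (2 : Fin 3), fun τ => ?_⟩
  rw [exPay_pure, rps02]
  exact exPay_le_one τ _

lemma PR_DE : (pureStrat (1 : Fin 3), pureStrat (0 : Fin 3)) ∈ DE rps rps := by
  refine ⟨rock_undom, fun σ σ' _ => ?_⟩
  rw [exPay_pure, rps10]
  exact exPay_le_one σ σ'

end Aux5
section Aux6

lemma wval1 (ε : ℝ) :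
    (Finsupp.single ((rps, 1) : GType (Fin 3)) ε
      + Finsupp.single ((rps, 2) : GType (Fin 3)) (1 - ε)) ((rps, 1) : GType (Fin 3)) = ε := by
  simp [Finsupp.single_apply, Ne.symm ne12]

lemma wval2 (ε : ℝ) :
    (Finsupp.single ((rps, 1) : GType (Fin 3)) ε
      + Finsupp.single ((rps, 2) : GType (Fin 3)) (1 - ε)) ((rps, 2) : GType (Fin 3)) = 1 - ε := by
  simp [Finsupp.single_apply, ne12]

lemma wval0 (ε : ℝ) (θ : GType (Fin 3)) (ha : θ ≠ ((rps, 1) : GType (Fin 3)))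
    (hb : θ ≠ ((rps, 2) : GType (Fin 3))) :
    (Finsupp.single ((rps, 1) : GType (Fin 3)) ε
      + Finsupp.single ((rps, 2) : GType (Fin 3)) (1 - ε)) θ = 0 := by
  simp [Finsupp.single_apply, Ne.symm ha, Ne.symm hb]

lemma wsupp (ε : ℝ) (hε0 : 0 < ε) (hε1 : ε < 1) :
    (Finsupp.single ((rps, 1) : GType (Fin 3)) ε
      + Finsupp.single ((rps, 2) : GType (Fin 3)) (1 - ε)).support
      = {((rps, 1) : GType (Fin 3)), ((rps, 2) : GType (Fin 3))} := by
  ext θ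
  simp only [Finsupp.mem_support_iff, Finset.mem_insert, Finset.mem_singleton]
  rcases eq_or_ne θ ((rps, 1) : GType (Fin 3)) with h | h
  · subst h
    have hne : (Finsupp.single ((rps, 1) : GType (Fin 3)) ε
        + Finsupp.single ((rps, 2) : GType (Fin 3)) (1 - ε)) ((rps, 1) : GType (Fin 3)) ≠ 0 := by
      rw [wval1]; exact ne_of_gt hε0
    exact iff_of_true hne (Or.inl rfl)
  rcases eq_or_ne θ ((rps, 2) : GType (Fin 3)) with h' | h'
  · subst h'
    have hne : (Finsupp.single ((rps, 1) : GType (Fin 3)) ε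
        + Finsupp.single ((rps, 2) : GType (Fin 3)) (1 - ε)) ((rps, 2) : GType (Fin 3)) ≠ 0 := by
      rw [wval2]; exact sub_ne_zero_of_ne (ne_of_gt hε1)
    exact iff_of_true hne (Or.inr rfl)
  · rw [wval0 ε θ h h']
    simp [h, h']

lemma nsc_lemma (M : Model (Fin 3)) (hpi : M.π = rps)
    (hq : ∀ n n' : ℕ+, n' < n → M.q n n' = 1)
    (hk2 : M.k 2 = 1) (hk3 : 2 < M.k 3)
    (ε : ℝ) (hε0 : 0 < ε) (hε1 : ε < 1) (c : Config M)
    (hcw : c.dist.w = Finsupp.single ((rps, 1) : GType (Fin 3)) ε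
      + Finsupp.single ((rps, 2) : GType (Fin 3)) (1 - ε)) : IsNSC c := by
  intro μ'
  refine ⟨1/2, ⟨by norm_num, by norm_num⟩, ?_⟩
  intro ε' _ ct hfocal _
  intro ν hνs
  refine ⟨1/2, ⟨by norm_num, by norm_num⟩, ?_⟩
  intro t _
  have hμs : c.dist.w.support ⊆ ct.supp := hfocal.1
  have h1 : ((rps, 1) : GType (Fin 3)) ∈ ct.supp := by
    refine hμs ?_
    rw [hcw, wsupp ε hε0 hε1]
    simp
  have h2 : ((rps, 2) : GType (Fin 3)) ∈ ct.supp := by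
    refine hμs ?_
    rw [hcw, wsupp ε hε0 hε1]
    simp
  exact nss_key M hpi hq hk2 hk3 ε ⟨hε0, hε1⟩ ct h1 h2 c.dist ν hcw hμs hνs t

lemma fit_lemma (M : Model (Fin 3)) (hpi : M.π = rps)
    (hq : ∀ n n' : ℕ+, n' < n → M.q n n' = 1)
    (hk2 : M.k 2 = 1)
    (ε : ℝ) (hε0 : 0 < ε) (hε1 : ε < 1) (c : Config M)
    (hcw : c.dist.w = Finsupp.single ((rps, 1) : GType (Fin 3)) ε
      + Finsupp.single ((rps, 2) : GType (Fin 3)) (1 - ε))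
    (hbn : ∀ θ θ', c.bN θ θ' = uniformStrat (Fin 3))
    (hbd21 : c.bD ((rps, 2) : GType (Fin 3)) ((rps, 1) : GType (Fin 3)) = pureStrat (1 : Fin 3))
    (hbd12 : c.bD ((rps, 1) : GType (Fin 3)) ((rps, 2) : GType (Fin 3)) = pureStrat (0 : Fin 3)) :
    ∀ θ ∈ c.supp, expFit c θ = ε - 1 := by
  have hsupp : c.supp = {((rps, 1) : GType (Fin 3)), ((rps, 2) : GType (Fin 3))} := by
    rw [Config.supp, hcw, wsupp ε hε0 hε1]
  have q11 : M.q 1 1 = 0 := q_zero M (by decide)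
  have q22 : M.q 2 2 = 0 := q_zero M (by decide)
  have q12 : M.q 1 2 = 0 := q_zero M (by decide)
  have q21 : M.q 2 1 = 1 := hq 2 1 (by decide)
  have cf11 : condFit c ((rps, 1) : GType (Fin 3)) ((rps, 1) : GType (Fin 3)) = 0 := by
    rw [condFit, hbn, hpi, exPay_uniform_right]
    show (M.q 1 1 + M.q 1 1) * _ + (1 - M.q 1 1 - M.q 1 1) * 0 = 0
    rw [q11]; ring
  have cf22 : condFit c ((rps, 2) : GType (Fin 3)) ((rps, 2) : GType (Fin 3)) = 0 := by
    rw [condFit, hbn, hpi, exPay_uniform_right]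
    show (M.q 2 2 + M.q 2 2) * _ + (1 - M.q 2 2 - M.q 2 2) * 0 = 0
    rw [q22]; ring
  have cf12 : condFit c ((rps, 1) : GType (Fin 3)) ((rps, 2) : GType (Fin 3)) = -1 := by
    rw [condFit, hbd12, hbd21, hpi, exPay_pure, rps01]
    show (M.q 1 2 + M.q 2 1) * (-1) + (1 - M.q 1 2 - M.q 2 1) * _ = -1
    rw [q12, q21]; ring
  have cf21 : condFit c ((rps, 2) : GType (Fin 3)) ((rps, 1) : GType (Fin 3)) = 1 := by
    rw [condFit, hbd12, hbd21, hpi, exPay_pure, rps10]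
    show (M.q 2 1 + M.q 1 2) * 1 + (1 - M.q 2 1 - M.q 1 2) * _ = 1
    rw [q12, q21]; ring
  intro θ hθ
  rw [hsupp] at hθ
  simp only [Finset.mem_insert, Finset.mem_singleton] at hθ
  rcases hθ with h | h <;> subst h
  · rw [expFit, hsupp, Finset.sum_pair ne12, hcw, wval1, wval2, cf11, cf12]
    show ε * 0 + (1 - ε) * (-1) - M.k 1 = ε - 1
    rw [M.k_one]; ring
  · rw [expFit, hsupp, Finset.sum_pair ne12, hcw, wval1, wval2, cf21, cf22]
    show ε * 1 + (1 - ε) * 0 - M.k 2 = ε - 1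
    rw [hk2]; ring

end Aux6
/-- In Rock-Paper-Scissors with `q(n,n') = 1` for `n > n'`, `k_2 = 1` and
`k_3 > 2`, for each `ε ∈ (0,1)` the configuration in which a fraction `ε` of agents are
materialistic of level 1 and `1−ε` are materialistic of level 2, deceiving level-2 agents play
Paper against deceived level-1 agents playing Rock, and equal levels play the uniform Nash
equilibrium, is an NSC in which every incumbent's expected fitness equals `ε − 1`. -/
theorem stmt10 (M : Model (Fin 3)) (hpi : M.π = rps)
    (hq : ∀ n n' : ℕ+, n' < n → M.q n n' = 1)
    (hk2 : M.k 2 = 1) (hk3 : 2 < M.k 3)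
    (ε : ℝ) (hε : ε ∈ Set.Ioo (0:ℝ) 1) :
    ∃ c : Config M,
      c.dist.w = Finsupp.single ((rps, 1) : GType (Fin 3)) ε
          + Finsupp.single ((rps, 2) : GType (Fin 3)) (1 - ε) ∧
      c.bD (rps, 2) (rps, 1) = pureStrat (1 : Fin 3) ∧
      c.bD (rps, 1) (rps, 2) = pureStrat (0 : Fin 3) ∧
      c.bN (rps, 1) (rps, 1) = uniformStrat (Fin 3) ∧
      c.bN (rps, 2) (rps, 2) = uniformStrat (Fin 3) ∧
      IsNSC c ∧
      (∀ θ ∈ c.supp, expFit c θ = ε - 1) := by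
  obtain ⟨hε0, hε1⟩ := hε
  set inc1 : GType (Fin 3) := (rps, 1) with hinc1
  set inc2 : GType (Fin 3) := (rps, 2) with hinc2
  have hne12 : inc1 ≠ inc2 := ne12
  set w : GType (Fin 3) →₀ ℝ :=
    Finsupp.single inc1 ε + Finsupp.single inc2 (1 - ε) with hw
  have hw1 : w inc1 = ε := by
    rw [hw]; simp [Finsupp.single_apply, Ne.symm hne12]
  have hw2 : w inc2 = 1 - ε := by
    rw [hw]; simp [Finsupp.single_apply, hne12]
  have hw0 : ∀ θ : GType (Fin 3), θ ≠ inc1 → θ ≠ inc2 → w θ = 0 := by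
    intro θ ha hb
    rw [hw]; simp [Finsupp.single_apply, Ne.symm ha, Ne.symm hb]
  have hsupp : w.support = {inc1, inc2} := by
    ext θ
    simp only [Finsupp.mem_support_iff, Finset.mem_insert, Finset.mem_singleton]
    rcases eq_or_ne θ inc1 with h | h
    · subst h
      have hne : w inc1 ≠ 0 := by rw [hw1]; exact ne_of_gt hε0
      exact iff_of_true hne (Or.inl rfl)
    rcases eq_or_ne θ inc2 with h' | h'
    · subst h'
      have hne : w inc2 ≠ 0 := by rw [hw2]; exact sub_ne_zero_of_ne (ne_of_gt hε1)
      exact iff_of_true hne (Or.inr rfl)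
    · rw [hw0 θ h h']
      simp [h, h']
  have hmem : ∀ θ : GType (Fin 3), θ ∈ w.support → θ = inc1 ∨ θ = inc2 := by
    intro θ hθ
    rw [hsupp] at hθ
    simpa using hθ
  have hd : TypeDist (Fin 3) := {
    w := w
    nonneg := fun θ => by
      rcases eq_or_ne θ inc1 with h | h
      · subst h; rw [hw1]; linarith
      rcases eq_or_ne θ inc2 with h' | h'
      · subst h'; rw [hw2]; linarith
      · rw [hw0 θ h h']
    total := by rw [hsupp, Finset.sum_pair hne12, hw1, hw2]; ring }
  refine ⟨{
    dist := {
      w := w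
      nonneg := fun θ => by
        rcases eq_or_ne θ inc1 with h | h
        · subst h; rw [hw1]; linarith
        rcases eq_or_ne θ inc2 with h' | h'
        · subst h'; rw [hw2]; linarith
        · rw [hw0 θ h h']
      total := by rw [hsupp, Finset.sum_pair hne12, hw1, hw2]; ring }
    bN := fun _ _ => uniformStrat (Fin 3)
    bD := fun θ θ' => if θ'.2 < θ.2 then pureStrat (1 : Fin 3) else pureStrat (0 : Fin 3)
    bN_mem := fun θ hθ θ' hθ' _ => by
      rcases hmem θ hθ with h | h <;> rcases hmem θ' hθ' with h' | h' <;>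
        subst h <;> subst h' <;> exact uniform_NE
    bD_mem := fun θ hθ θ' hθ' hlt => by
      rcases hmem θ hθ with h | h <;> rcases hmem θ' hθ' with h' | h' <;>
          subst h <;> subst h'
      · exact absurd hlt (by decide)
      · exact absurd hlt (by decide)
      · simp only [hinc1, hinc2] at hlt ⊢
        rw [if_pos (show (1:ℕ+) < 2 by decide), if_neg (show ¬ (2:ℕ+) < 1 by decide)]
        exact PR_DE
      · exact absurd hlt (by decide) }, rfl,
    by show (if ((1:ℕ+) < 2) then pureStrat (1:Fin 3) else pureStrat 0) = pureStrat 1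
       exact if_pos (by decide),
    by show (if ((2:ℕ+) < 1) then pureStrat (1:Fin 3) else pureStrat 0) = pureStrat 0
       exact if_neg (by decide),
    rfl, rfl, ?_, ?_⟩
  · exact nsc_lemma M hpi hq hk2 hk3 ε hε0 hε1 _ rfl
  · exact fit_lemma M hpi hq hk2 ε hε0 hε1 _ rfl (fun _ _ => rfl)
      (by show (if ((1:ℕ+) < 2) then pureStrat (1:Fin 3) else pureStrat 0) = pureStrat 1
          exact if_pos (by decide))
      (by show (if ((2:ℕ+) < 1) then pureStrat (1:Fin 3) else pureStrat 0) = pureStrat 0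
          exact if_neg (by decide))
end
end

section
/- Pure selection from deception equilibria: if (σ₁,σ₂)∈DE(θ₁,θ₂) (with n_{θ₁}>n_{θ₂}), then there exist pure actions a₁,a₁' in the support of σ₁ and a₂,a₂' in the support of σ₂ such that (a₁,a₂)∈DE(θ₁,θ₂) and (a₁',a₂')∈DE(θ₁,θ₂), with π(a₁,a₂) ≥ π(σ₁,σ₂) and π(a₁',a₂') ≤ π(σ₁,σ₂). -/
open scoped Classical
set_option maxHeartbeats 1000000

noncomputable section

variable {A : Type} [Fintype A]

section Aux

variable {A : Type} [Fintype A]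

lemma aux_exists_ge {ι : Type} [Fintype ι] (w g : ι → ℝ)
    (h0 : ∀ i, 0 ≤ w i) (h1 : ∑ i, w i = 1) :
    ∃ i, 0 < w i ∧ ∑ j, w j * g j ≤ g i := by
  by_contra h
  push_neg at h
  obtain ⟨i0, hi0⟩ : ∃ i, 0 < w i := by
    by_contra h'
    push_neg at h'
    have hz : ∀ i, w i = 0 := fun i => le_antisymm (h' i) (h0 i)
    simp [hz] at h1
  have hlt : ∑ j, w j * g j < ∑ j, w j * (∑ j, w j * g j) := by
    apply Finset.sum_lt_sum
    · intro j _
      rcases eq_or_lt_of_le (h0 j) with hj | hj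
      · simp [← hj]
      · exact mul_le_mul_of_nonneg_left (h j hj).le hj.le
    · exact ⟨i0, Finset.mem_univ _, mul_lt_mul_of_pos_left (h i0 hi0) hi0⟩
  rw [← Finset.sum_mul, h1, one_mul] at hlt
  exact lt_irrefl _ hlt

lemma aux_exists_le {ι : Type} [Fintype ι] (w g : ι → ℝ)
    (h0 : ∀ i, 0 ≤ w i) (h1 : ∑ i, w i = 1) :
    ∃ i, 0 < w i ∧ g i ≤ ∑ j, w j * g j := by
  obtain ⟨i, hi, hle⟩ := aux_exists_ge w (fun j => -g j) h0 h1
  refine ⟨i, hi, ?_⟩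
  have : -(∑ j, w j * g j) ≤ -g i := by
    simpa [mul_neg, ← Finset.sum_neg_distrib] using hle
  linarith

lemma aux_eq_of_max {ι : Type} [Fintype ι] (w g : ι → ℝ) (V : ℝ)
    (h0 : ∀ i, 0 ≤ w i) (h1 : ∑ i, w i = 1)
    (hg : ∀ i, 0 < w i → g i ≤ V) (hs : ∑ i, w i * g i = V) :
    ∀ i, 0 < w i → g i = V := by
  intro i hi
  by_contra hne
  have hlt : g i < V := lt_of_le_of_ne (hg i hi) hne
  have h2 : ∑ j, w j * g j < ∑ j, w j * V := by
    apply Finset.sum_lt_sum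
    · intro j _
      rcases eq_or_lt_of_le (h0 j) with hj | hj
      · simp [← hj]
      · exact mul_le_mul_of_nonneg_left (hg j hj) hj.le
    · exact ⟨i, Finset.mem_univ _, mul_lt_mul_of_pos_left hlt hi⟩
  rw [← Finset.sum_mul, h1, one_mul, hs] at h2
  exact lt_irrefl _ h2

lemma aux_exPay_pure (f : A → A → ℝ) (a b : A) :
    exPay f (pureStrat a) (pureStrat b) = f a b := by
  simp [exPay, pureStrat, ite_mul, Finset.sum_ite_eq']

lemma aux_exPay_prod (f : A → A → ℝ) (σ σ' : Mixed A) :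
    exPay f σ σ' = ∑ p : A × A, σ.1 p.1 * σ'.1 p.2 * f p.1 p.2 := by
  rw [exPay, Fintype.sum_prod_type]

lemma aux_W_sum (σ σ' : Mixed A) :
    ∑ p : A × A, σ.1 p.1 * σ'.1 p.2 = 1 := by
  rw [Fintype.sum_prod_type]
  simp only [← Finset.mul_sum, σ'.2.2, mul_one]
  exact σ.2.2

lemma aux_pos_pair {x y : ℝ} (hx : 0 ≤ x) (hy : 0 ≤ y) (hp : 0 < x * y) :
    0 < x ∧ 0 < y := by
  refine ⟨lt_of_le_of_ne hx ?_, lt_of_le_of_ne hy ?_⟩ <;>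
    · intro h; rw [← h] at hp; simp at hp

lemma aux_pure_mem_BR (u : A → A → ℝ) (τ σ : Mixed A) (h : σ ∈ BR u τ)
    (a : A) (ha : 0 < σ.1 a) : pureStrat a ∈ BR u τ := by
  have hg : ∀ b, 0 < σ.1 b → exPay u (pureStrat b) τ ≤ exPay u σ τ :=
    fun b _ => h (pureStrat b)
  have hs : ∑ b, σ.1 b * exPay u (pureStrat b) τ = exPay u σ τ := by
    simp [exPay, pureStrat, ite_mul, Finset.sum_ite_eq', Finset.mul_sum, mul_assoc]
  have heq := aux_eq_of_max σ.1 (fun b => exPay u (pureStrat b) τ)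
    (exPay u σ τ) σ.2.1 σ.2.2 hg hs a ha
  exact fun ρ => (h ρ).trans_eq heq.symm

end Aux


/-- Pure selection from deception equilibria: any mixed deception equilibrium
admits pure deception equilibria supported on it whose fitness brackets the mixed fitness. -/
theorem stmt11 [Nonempty A] (pay : A → A → ℝ)
    (θ1 θ2 : GType A) (hlvl : θ2.2 < θ1.2)
    (σ1 σ2 : Mixed A) (hDE : (σ1, σ2) ∈ DE θ1.1 θ2.1) :
    ∃ a1 a2 a1' a2' : A,
      0 < σ1.1 a1 ∧ 0 < σ2.1 a2 ∧ 0 < σ1.1 a1' ∧ 0 < σ2.1 a2' ∧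
      (pureStrat a1, pureStrat a2) ∈ DE θ1.1 θ2.1 ∧
      (pureStrat a1', pureStrat a2') ∈ DE θ1.1 θ2.1 ∧
      exPay pay σ1 σ2 ≤ pay a1 a2 ∧ pay a1' a2' ≤ exPay pay σ1 σ2 := by
  obtain ⟨hUndom, hmax⟩ := hDE
  set u := θ1.1 with hu
  set u' := θ2.1 with hu'
  set W : A × A → ℝ := fun p => σ1.1 p.1 * σ2.1 p.2 with hW
  have hW0 : ∀ p, 0 ≤ W p := fun p => mul_nonneg (σ1.2.1 _) (σ2.2.1 _)
  have hW1 : ∑ p, W p = 1 := aux_W_sum σ1 σ2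
  have hWpos : ∀ p : A × A, 0 < W p → 0 < σ1.1 p.1 ∧ 0 < σ2.1 p.2 :=
    fun p hp => aux_pos_pair (σ1.2.1 _) (σ2.2.1 _) hp
  -- undominatedness of pure strategies in support of σ2
  have hUpure : ∀ b, 0 < σ2.1 b → pureStrat b ∈ Undom u' := by
    intro b hb
    obtain ⟨τ, hτ⟩ := hUndom
    exact ⟨τ, aux_pure_mem_BR u' τ σ2 hτ b hb⟩
  -- all support pairs attain the max of u
  have hval : ∀ p : A × A, 0 < W p → u p.1 p.2 = exPay u σ1 σ2 := by
    apply aux_eq_of_max W (fun p => u p.1 p.2) (exPay u σ1 σ2) hW0 hW1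
    · intro p hp
      have h2 := (hWpos p hp).2
      have := hmax (pureStrat p.1) (pureStrat p.2) (hUpure p.2 h2)
      rwa [aux_exPay_pure] at this
    · exact (aux_exPay_prod u σ1 σ2).symm
  have hpureDE : ∀ p : A × A, 0 < W p →
      (pureStrat p.1, pureStrat p.2) ∈ DE u u' := by
    intro p hp
    refine ⟨hUpure p.2 (hWpos p hp).2, ?_⟩
    intro σ σ' hσ'
    rw [aux_exPay_pure, hval p hp]
    exact hmax σ σ' hσ'
  have hpay : ∑ p : A × A, W p * pay p.1 p.2 = exPay pay σ1 σ2 :=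
    (aux_exPay_prod pay σ1 σ2).symm
  obtain ⟨p, hp, hple⟩ := aux_exists_ge W (fun p => pay p.1 p.2) hW0 hW1
  obtain ⟨q, hq, hqle⟩ := aux_exists_le W (fun p => pay p.1 p.2) hW0 hW1
  rw [hpay] at hple hqle
  exact ⟨p.1, p.2, q.1, q.2, (hWpos p hp).1, (hWpos p hp).2,
    (hWpos q hq).1, (hWpos q hq).2, hpureDE p hp, hpureDE q hq, hple, hqle⟩
end
end

section
/- Interdependent preferences, sufficiency: fix a*∈A, a cognitive level n, and a pure minmax action a_M̄∈argmin_{a'∈A} max_{a∈A} π(a,a'). Suppose Θ_ID contains a type θ̂ with cognitive level n and utility u_{θ̂}(a,a',θ')=1 if (θ'=θ̂ and a=a*) or (θ'≠θ̂ and a=a_M̄), and u_{θ̂}(a,a',θ')=0 otherwise. If π(a*,a*)−M̄ > k_n and g(a*) < c(n), then the monomorphic pure configuration in which all incumbents are of type θ̂ and the outcome is a* is an evolutionarily stable configuration. -/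
open scoped Classical
set_option maxHeartbeats 1000000

noncomputable section

variable {A : Type} [Fintype A]

/-! ### The model with type-interdependent preferences -/

variable {T : Type}

/-- The environment with type-interdependent preferences: `T` is the set of types `Θ_ID`;
each type has a cognitive level and a utility over action profiles and the opponent's type. -/
structure IDModel (A : Type) [Fintype A] (T : Type) : Type where
  π : A → A → ℝ
  lvl : T → ℕ+
  util : T → A → A → T → ℝ
  k : ℕ+ → ℝ
  q : ℕ+ → ℕ+ → ℝ
  k_nonneg : ∀ n, 0 ≤ k n
  k_mono : StrictMono k
  k_one : k 1 = 0
  k_tendsto : Filter.Tendsto k Filter.atTop Filter.atTop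
  q_nonneg : ∀ n n', 0 ≤ q n n'
  q_le_one : ∀ n n', q n n' ≤ 1
  q_pos_iff : ∀ n n', 0 < q n n' ↔ n' < n

/-- The utility of type `t` facing opponent type `t'`, as a function of action profiles. -/
def IDModel.u (M : IDModel A T) (t t' : T) : A → A → ℝ := fun a a' => M.util t a a' t'

/-- Best replies of type `t` to strategy `σ'` of opponent type `t'`. -/
def BRID (M : IDModel A T) (t : T) (σ' : Mixed A) (t' : T) : Set (Mixed A) :=
  { σ | ∀ τ : Mixed A, exPay (M.u t t') τ σ' ≤ exPay (M.u t t') σ σ' }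

/-- Undominated strategies of type `t`. -/
def UndomID (M : IDModel A T) (t : T) : Set (Mixed A) :=
  { σ | ∃ σ' : Mixed A, ∃ t' : T, σ ∈ BRID M t σ' t' }

/-- Nash equilibria of the complete-information game between types `t` and `t'`. -/
def NEID (M : IDModel A T) (t t' : T) : Set (Mixed A × Mixed A) :=
  { p | p.1 ∈ BRID M t p.2 t' ∧ p.2 ∈ BRID M t' p.1 t }

/-- Deception equilibria of deceiver `t` against deceived `t'`. -/
def DEID (M : IDModel A T) (t t' : T) : Set (Mixed A × Mixed A) :=
  { p | p.2 ∈ UndomID M t' ∧ ∀ σ σ' : Mixed A, σ' ∈ UndomID M t' →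
      exPay (M.u t t') σ σ' ≤ exPay (M.u t t') p.1 p.2 }

/-- A finite-support probability distribution over types. -/
structure DistID (T : Type) : Type where
  w : T →₀ ℝ
  nonneg : ∀ t, 0 ≤ w t
  total : ∑ t ∈ w.support, w t = 1

/-- A configuration in the interdependent model. -/
structure ConfigID {A : Type} [Fintype A] {T : Type} (M : IDModel A T) : Type where
  dist : DistID T
  bN : T → T → Mixed A
  bD : T → T → Mixed A
  bN_mem : ∀ t ∈ dist.w.support, ∀ t' ∈ dist.w.support,
    M.q (M.lvl t) (M.lvl t') + M.q (M.lvl t') (M.lvl t) < 1 →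
      (bN t t', bN t' t) ∈ NEID M t t'
  bD_mem : ∀ t ∈ dist.w.support, ∀ t' ∈ dist.w.support,
    M.lvl t' < M.lvl t → (bD t t', bD t' t) ∈ DEID M t t'

/-- The incumbents. -/
def ConfigID.supp {M : IDModel A T} (c : ConfigID M) : Finset T := c.dist.w.support

/-- Conditional fitness of `t` against `t'`. -/
def condFitID {M : IDModel A T} (c : ConfigID M) (t t' : T) : ℝ :=
  (M.q (M.lvl t) (M.lvl t') + M.q (M.lvl t') (M.lvl t)) * exPay M.π (c.bD t t') (c.bD t' t)
    + (1 - M.q (M.lvl t) (M.lvl t') - M.q (M.lvl t') (M.lvl t)) *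
        exPay M.π (c.bN t t') (c.bN t' t)

/-- Expected fitness of type `t`. -/
def expFitID {M : IDModel A T} (c : ConfigID M) (t : T) : ℝ :=
  (∑ t' ∈ c.supp, c.dist.w t' * condFitID c t t') - M.k (M.lvl t)

/-- Payoff of the induced type game. -/
def typePayID {M : IDModel A T} (c : ConfigID M) (t t' : T) : ℝ :=
  condFitID c t t' - M.k (M.lvl t)

/-- Bilinear extension of a type-game payoff to finitely supported weights. -/
def playTID (F : T → T → ℝ) (x y : T →₀ ℝ) : ℝ :=
  ∑ t ∈ x.support, ∑ t' ∈ y.support, x t * y t' * F t t'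

/-- Neutrally stable strategy of the type game with pure strategies `S` and payoff `F`. -/
def IsNSSOnID (F : T → T → ℝ) (S : Finset T) (μ : DistID T) : Prop :=
  ∀ ν : DistID T, ν.w.support ⊆ S →
    ∃ εb : ℝ, εb ∈ Set.Ioo (0:ℝ) 1 ∧ ∀ ε ∈ Set.Ioo (0:ℝ) εb,
      playTID F ν.w ((1 - ε) • μ.w + ε • ν.w) ≤ playTID F μ.w ((1 - ε) • μ.w + ε • ν.w)

/-- Evolutionarily stable strategy of the type game with pure strategies `S`, payoff `F`. -/
def IsESSOnID (F : T → T → ℝ) (S : Finset T) (μ : DistID T) : Prop :=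
  ∀ ν : DistID T, ν.w.support ⊆ S → ν.w ≠ μ.w →
    ∃ εb : ℝ, εb ∈ Set.Ioo (0:ℝ) 1 ∧ ∀ ε ∈ Set.Ioo (0:ℝ) εb,
      playTID F ν.w ((1 - ε) • μ.w + ε • ν.w) < playTID F μ.w ((1 - ε) • μ.w + ε • ν.w)

/-- `ct` is focal with respect to `c`. -/
def FocalID {M : IDModel A T} (c ct : ConfigID M) : Prop :=
  c.supp ⊆ ct.supp ∧
    ∀ t ∈ c.supp, ∀ t' ∈ c.supp, ct.bN t t' = c.bN t t' ∧ ct.bD t t' = c.bD t t'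

/-- Neutrally stable configuration. -/
def IsNSCID {M : IDModel A T} (c : ConfigID M) : Prop :=
  ∀ μ' : DistID T, ∃ εb : ℝ, εb ∈ Set.Ioo (0:ℝ) 1 ∧ ∀ ε ∈ Set.Ioo (0:ℝ) εb,
    ∀ ct : ConfigID M, FocalID c ct → ct.dist.w = (1 - ε) • c.dist.w + ε • μ'.w →
      IsNSSOnID (typePayID ct) ct.supp c.dist

/-- Evolutionarily stable configuration. -/
def IsESCID {M : IDModel A T} (c : ConfigID M) : Prop :=
  ∀ μ' : DistID T, μ'.w ≠ c.dist.w →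
    ∃ εb : ℝ, εb ∈ Set.Ioo (0:ℝ) 1 ∧ ∀ ε ∈ Set.Ioo (0:ℝ) εb,
      ∀ ct : ConfigID M, FocalID c ct → ct.dist.w = (1 - ε) • c.dist.w + ε • μ'.w →
        IsESSOnID (typePayID ct) ct.supp c.dist

/-- Pure configuration with outcome `a`. -/
def IsPureCfgID {M : IDModel A T} (c : ConfigID M) (a : A) : Prop :=
  ∀ t ∈ c.supp, ∀ t' ∈ c.supp,
    (M.q (M.lvl t) (M.lvl t') + M.q (M.lvl t') (M.lvl t) < 1 → c.bN t t' = pureStrat a) ∧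
    (0 < M.q (M.lvl t) (M.lvl t') → c.bD t t' = pureStrat a)

/-- The pure maxmin value `M̲`. -/
def maxminID (M : IDModel A T) [Nonempty A] : ℝ :=
  Finset.univ.sup' Finset.univ_nonempty fun a =>
    Finset.univ.inf' Finset.univ_nonempty fun a' => M.π a a'

/-- The pure minmax value `M̄`. -/
def minmaxID (M : IDModel A T) [Nonempty A] : ℝ :=
  Finset.univ.inf' Finset.univ_nonempty fun a' =>
    Finset.univ.sup' Finset.univ_nonempty fun a => M.π a a'

/-- The deviation gain of action `a`. -/
def devGainID (M : IDModel A T) [Nonempty A] (a : A) : ℝ :=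
  (Finset.univ.sup' Finset.univ_nonempty fun a' => M.π a' a) - M.π a a

/-- The effective cost of deceiving cognitive level `n`:
`c(n) = min_{m > n} (k_m − k_n)/q(m,n)`. -/
def effCostID (M : IDModel A T) (n : ℕ+) : ℝ :=
  ⨅ m : { m : ℕ+ // n < m }, (M.k m.1 - M.k n) / M.q m.1 n

namespace Stmt13Helpers

variable {A : Type} [Fintype A]

lemma coord_le_one (σ : Mixed A) (a : A) : σ.1 a ≤ 1 := by
  calc σ.1 a ≤ ∑ b, σ.1 b :=
        Finset.single_le_sum (fun b _ => σ.2.1 b) (Finset.mem_univ a)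
  _ = 1 := σ.2.2

lemma eq_pure_of_one {σ : Mixed A} {a : A} (h : σ.1 a = 1) : σ = pureStrat a := by
  apply Subtype.ext
  funext b
  by_cases hb : b = a
  · simp [pureStrat, hb, h]
  · have hsum : ∑ x ∈ Finset.univ.erase a, σ.1 x + σ.1 a = ∑ x, σ.1 x :=
      Finset.sum_erase_add _ _ (Finset.mem_univ a)
    have h0 : ∑ x ∈ Finset.univ.erase a, σ.1 x = 0 := by
      rw [σ.2.2] at hsum; linarith
    have := (Finset.sum_eq_zero_iff_of_nonneg (fun x _ => σ.2.1 x)).mp h0 b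
      (Finset.mem_erase.mpr ⟨hb, Finset.mem_univ b⟩)
    simp [pureStrat, hb, this]

lemma exPay_eq (f : A → A → ℝ) (σ σ' : Mixed A) :
    exPay f σ σ' = ∑ a, σ.1 a * ∑ a', σ'.1 a' * f a a' := by
  unfold exPay
  refine Finset.sum_congr rfl fun a _ => ?_
  rw [Finset.mul_sum]
  refine Finset.sum_congr rfl fun a' _ => by ring

lemma exPay_pure_left (f : A → A → ℝ) (a : A) (σ' : Mixed A) :
    exPay f (pureStrat a) σ' = ∑ a', σ'.1 a' * f a a' := by
  rw [exPay_eq]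
  simp [pureStrat, ite_mul, Finset.sum_ite_eq']

lemma exPay_pure_right (f : A → A → ℝ) (σ : Mixed A) (b : A) :
    exPay f σ (pureStrat b) = ∑ a, σ.1 a * f a b := by
  rw [exPay_eq]
  refine Finset.sum_congr rfl fun a _ => ?_
  congr 1
  simp [pureStrat, ite_mul, Finset.sum_ite_eq']

lemma exPay_pure (f : A → A → ℝ) (a b : A) :
    exPay f (pureStrat a) (pureStrat b) = f a b := by
  rw [exPay_pure_right]
  simp [pureStrat, ite_mul, Finset.sum_ite_eq']

lemma exPay_ind {u : A → A → ℝ} {a₀ : A}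
    (hu : ∀ a a', u a a' = if a = a₀ then 1 else 0) (σ σ' : Mixed A) :
    exPay u σ σ' = σ.1 a₀ := by
  rw [exPay_eq]
  have hinner : ∀ a, ∑ a', σ'.1 a' * u a a' = if a = a₀ then 1 else 0 := by
    intro a
    simp only [hu, mul_ite, mul_one, mul_zero]
    split
    · exact σ'.2.2
    · simp
  simp only [hinner, mul_ite, mul_one, mul_zero, Finset.sum_ite_eq', Finset.mem_univ, if_true]

lemma br_of_indicator {u : A → A → ℝ} {a₀ : A}
    (hu : ∀ a a', u a a' = if a = a₀ then 1 else 0) {σ σ' : Mixed A}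
    (h : ∀ τ : Mixed A, exPay u τ σ' ≤ exPay u σ σ') : σ = pureStrat a₀ := by
  have h1 := h (pureStrat a₀)
  rw [exPay_ind hu, exPay_ind hu] at h1
  have : (pureStrat a₀ : Mixed A).1 a₀ = 1 := by simp [pureStrat]
  rw [this] at h1
  exact eq_pure_of_one (le_antisymm (coord_le_one σ a₀) h1)

lemma exists_pure_br [Nonempty A] (u : A → A → ℝ) (σ' : Mixed A) :
    ∃ a : A, ∀ τ : Mixed A, exPay u τ σ' ≤ exPay u (pureStrat a) σ' := by
  obtain ⟨a, -, ha⟩ := Finset.exists_max_image Finset.univ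
    (fun a => ∑ a', σ'.1 a' * u a a') Finset.univ_nonempty
  refine ⟨a, fun τ => ?_⟩
  rw [exPay_eq, exPay_pure_left]
  calc ∑ b, τ.1 b * ∑ a', σ'.1 a' * u b a'
      ≤ ∑ b, τ.1 b * ∑ a', σ'.1 a' * u a a' :=
        Finset.sum_le_sum fun b _ =>
          mul_le_mul_of_nonneg_left (ha b (Finset.mem_univ b)) (τ.2.1 b)
    _ = ∑ a', σ'.1 a' * u a a' := by rw [← Finset.sum_mul, τ.2.2, one_mul]

lemma exPay_pure_right_le [Nonempty A] (f : A → A → ℝ) (σ : Mixed A) (b : A) :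
    exPay f σ (pureStrat b) ≤ Finset.univ.sup' Finset.univ_nonempty fun a => f a b := by
  rw [exPay_pure_right]
  calc ∑ a, σ.1 a * f a b
      ≤ ∑ a, σ.1 a * Finset.univ.sup' Finset.univ_nonempty (fun a => f a b) :=
        Finset.sum_le_sum fun a _ =>
          mul_le_mul_of_nonneg_left (Finset.le_sup' (fun a => f a b) (Finset.mem_univ a)) (σ.2.1 a)
    _ = _ := by rw [← Finset.sum_mul, σ.2.2, one_mul]

lemma playT_superset {T : Type} (F : T → T → ℝ) (x y : T →₀ ℝ) (S : Finset T)
    (hx : x.support ⊆ S) (hy : y.support ⊆ S) :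
    playTID F x y = ∑ t ∈ S, ∑ t' ∈ S, x t * y t' * F t t' := by
  unfold playTID
  calc ∑ t ∈ x.support, ∑ t' ∈ y.support, x t * y t' * F t t'
      = ∑ t ∈ x.support, ∑ t' ∈ S, x t * y t' * F t t' :=
        Finset.sum_congr rfl fun t _ => Finset.sum_subset hy fun t' _ h => by
          rw [Finsupp.notMem_support_iff.mp h]; ring
    _ = ∑ t ∈ S, ∑ t' ∈ S, x t * y t' * F t t' :=
        Finset.sum_subset hx fun t _ h => Finset.sum_eq_zero fun t' _ => by
          rw [Finsupp.notMem_support_iff.mp h]; ring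

end Stmt13Helpers

/-- Interdependent preferences, sufficiency: if `Θ_ID` contains the
discriminating type `θ̂` of level `n` that plays `a*` against itself and the pure minmax
action `a_M̄` against everyone else, and if `π(a*,a*) − M̄ > k_n` and `g(a*) < c(n)`, then the
monomorphic pure configuration with incumbents `θ̂` and outcome `a*` is an ESC. -/
theorem stmt13 [Nonempty A] (hA : 3 ≤ Fintype.card A) {T : Type} (M : IDModel A T)
    (astar : A) (n : ℕ+) (aM : A)
    (haM : (Finset.univ.sup' Finset.univ_nonempty fun x => M.π x aM) = minmaxID M)
    (that : T) (hlvl : M.lvl that = n)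
    (hutil : ∀ (a a' : A) (t' : T), M.util that a a' t' =
      if (t' = that ∧ a = astar) ∨ (t' ≠ that ∧ a = aM) then 1 else 0)
    (hfit : minmaxID M < M.π astar astar - M.k n)
    (hg : devGainID M astar < effCostID M n) :
    (∃ c : ConfigID M, c.supp = {that} ∧ IsPureCfgID c astar) ∧
    (∀ c : ConfigID M, c.supp = {that} → IsPureCfgID c astar → IsESCID c) := by
  classical
  have hq0 : ∀ m m' : ℕ+, ¬ m' < m → M.q m m' = 0 := by
    intro m m' h
    rcases (M.q_nonneg m m').eq_or_lt with h0 | h0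
    · exact h0.symm
    · exact absurd ((M.q_pos_iff m m').mp h0) h
  have hqnn : M.q n n = 0 := hq0 n n (lt_irrefl n)
  have hgnn : 0 ≤ devGainID M astar := by
    unfold devGainID
    have := Finset.le_sup' (fun a' => M.π a' astar) (Finset.mem_univ astar)
    linarith
  have hsup_astar : (Finset.univ.sup' Finset.univ_nonempty fun a' => M.π a' astar)
      = M.π astar astar + devGainID M astar := by unfold devGainID; ring
  have hu_self : ∀ a a' : A, M.u that that a a' = if a = astar then 1 else 0 := by
    intro a a'
    simp only [IDModel.u, hutil]
    by_cases h : a = astar <;> simp [h]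
  have hu_other : ∀ t' : T, t' ≠ that → ∀ a a' : A,
      M.u that t' a a' = if a = aM then 1 else 0 := by
    intro t' ht' a a'
    simp only [IDModel.u, hutil]
    by_cases h : a = aM <;> simp [h, ht']
  have hbr_self : ∀ σ' σ : Mixed A, σ ∈ BRID M that σ' that → σ = pureStrat astar :=
    fun σ' σ h => Stmt13Helpers.br_of_indicator hu_self h
  have hbr_other : ∀ t' : T, t' ≠ that → ∀ σ' σ : Mixed A,
      σ ∈ BRID M that σ' t' → σ = pureStrat aM :=
    fun t' ht' σ' σ h => Stmt13Helpers.br_of_indicator (hu_other t' ht') h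
  have hUthat : ∀ σ ∈ UndomID M that, σ = pureStrat astar ∨ σ = pureStrat aM := by
    rintro σ ⟨σ', t'', hσ⟩
    by_cases h : t'' = that
    · subst h; exact Or.inl (hbr_self _ _ hσ)
    · exact Or.inr (hbr_other _ h _ _ hσ)
  have hUne : ∀ t : T, ∃ σ, σ ∈ UndomID M t := by
    intro t
    obtain ⟨a, ha⟩ := Stmt13Helpers.exists_pure_br (M.u t that) (pureStrat (Classical.arbitrary A))
    exact ⟨pureStrat a, pureStrat (Classical.arbitrary A), that, ha⟩
  have hMbar : ∀ σ : Mixed A, exPay M.π σ (pureStrat aM) ≤ minmaxID M := by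
    intro σ
    rw [← haM]
    exact Stmt13Helpers.exPay_pure_right_le M.π σ aM
  have hAst : ∀ σ : Mixed A,
      exPay M.π σ (pureStrat astar) ≤ M.π astar astar + devGainID M astar := by
    intro σ
    calc exPay M.π σ (pureStrat astar)
        ≤ Finset.univ.sup' Finset.univ_nonempty fun a' => M.π a' astar :=
          Stmt13Helpers.exPay_pure_right_le M.π σ astar
      _ = M.π astar astar + devGainID M astar := hsup_astar
  have hcost : ∀ m : ℕ+, n < m → devGainID M astar * M.q m n < M.k m - M.k n := by
    intro m hm
    have hqpos : 0 < M.q m n := (M.q_pos_iff m n).mpr hm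
    have hle : effCostID M n ≤ (M.k m - M.k n) / M.q m n := by
      have hbdd : BddBelow (Set.range fun m' : {m' : ℕ+ // n < m'} =>
          (M.k m'.1 - M.k n) / M.q m'.1 n) := by
        refine ⟨0, ?_⟩
        rintro x ⟨m', rfl⟩
        exact div_nonneg (sub_nonneg.mpr (M.k_mono.monotone m'.2.le)) (M.q_nonneg _ _)
      exact ciInf_le hbdd ⟨m, hm⟩
    have h2 := lt_of_lt_of_le hg hle
    rwa [lt_div_iff₀ hqpos] at h2
  constructor
  · -- existence of the pure configuration
    have hsupp_single : (Finsupp.single that (1:ℝ)).support = {that} :=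
      Finsupp.support_single_ne_zero that one_ne_zero
    have hne_key : ∀ τ : Mixed A, exPay (M.u that that) τ (pureStrat astar)
        ≤ exPay (M.u that that) (pureStrat astar) (pureStrat astar) := by
      intro τ
      rw [Stmt13Helpers.exPay_ind hu_self, Stmt13Helpers.exPay_ind hu_self]
      have h1 : (pureStrat astar : Mixed A).1 astar = 1 := by simp [pureStrat]
      rw [h1]
      exact Stmt13Helpers.coord_le_one τ astar
    refine ⟨⟨⟨Finsupp.single that 1, ?_, ?_⟩, fun _ _ => pureStrat astar,
      fun _ _ => pureStrat aM, ?_, ?_⟩, ?_, ?_⟩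
    · intro t; rw [Finsupp.single_apply]; split <;> norm_num
    · rw [hsupp_single]; simp
    · intro t ht t' ht' _
      have ht2 : t ∈ ({that} : Finset T) := by rw [← hsupp_single]; exact ht
      have ht2' : t' ∈ ({that} : Finset T) := by rw [← hsupp_single]; exact ht'
      rw [Finset.mem_singleton] at ht2 ht2'
      subst ht2; subst ht2'
      exact ⟨hne_key, hne_key⟩
    · intro t ht t' ht' hltl
      have ht2 : t ∈ ({that} : Finset T) := by rw [← hsupp_single]; exact ht
      have ht2' : t' ∈ ({that} : Finset T) := by rw [← hsupp_single]; exact ht'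
      rw [Finset.mem_singleton] at ht2 ht2'
      subst ht2; subst ht2'
      exact absurd hltl (lt_irrefl _)
    · exact hsupp_single
    · intro t ht t' ht'
      have ht2 : t ∈ ({that} : Finset T) := by rw [← hsupp_single]; exact ht
      have ht2' : t' ∈ ({that} : Finset T) := by rw [← hsupp_single]; exact ht'
      rw [Finset.mem_singleton] at ht2 ht2'
      subst ht2; subst ht2'
      refine ⟨fun _ => rfl, fun hq => ?_⟩
      rw [hlvl, hqnn] at hq
      exact absurd hq (lt_irrefl 0)
  · -- stability
    intro c hsupp hpure
    have hsupp' : c.dist.w.support = {that} := hsupp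
    have hthat_c : that ∈ c.supp := by rw [hsupp]; exact Finset.mem_singleton_self that
    have hw : c.dist.w = Finsupp.single that 1 := by
      have htot := c.dist.total
      rw [hsupp', Finset.sum_singleton] at htot
      ext x
      by_cases hx : x = that
      · subst hx; rw [htot, Finsupp.single_apply, if_pos rfl]
      · rw [Finsupp.single_apply, if_neg (fun hc => hx hc.symm)]
        refine Finsupp.notMem_support_iff.mp (fun hc => hx ?_)
        rw [hsupp'] at hc
        exact Finset.mem_singleton.mp hc
    have hbNself : ∀ ct : ConfigID M, FocalID c ct → ct.bN that that = pureStrat astar := by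
      intro ct hf
      rw [(hf.2 that hthat_c that hthat_c).1]
      exact (hpure that hthat_c that hthat_c).1 (by rw [hlvl, hqnn]; norm_num)
    have hVal : ∀ ct : ConfigID M, FocalID c ct →
        typePayID ct that that = M.π astar astar - M.k n := by
      intro ct hf
      unfold typePayID condFitID
      rw [hlvl, hqnn, hbNself ct hf, Stmt13Helpers.exPay_pure]
      ring
    have key : ∀ ct : ConfigID M, FocalID c ct → ∀ t ∈ ct.supp, t ≠ that →
        typePayID ct t that < M.π astar astar - M.k n := by
      intro ct hf t ht hne
      have hthat_ct : that ∈ ct.supp := hf.1 hthat_c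
      have hkt : 0 ≤ M.k (M.lvl t) := M.k_nonneg _
      have hknn : 0 ≤ M.k n := M.k_nonneg n
      rcases lt_trichotomy (M.lvl t) n with hlt | heq | hgt
      · -- lower level
        have hq1 : M.q (M.lvl t) n = 0 := hq0 _ _ (not_lt.mpr hlt.le)
        have hDE := ct.bD_mem that hthat_ct t ht (by rw [hlvl]; exact hlt)
        obtain ⟨σ'', hσ''⟩ := hUne t
        have hmax := hDE.2 (pureStrat aM) σ'' hσ''
        rw [Stmt13Helpers.exPay_ind (hu_other t hne),
          Stmt13Helpers.exPay_ind (hu_other t hne)] at hmax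
        have h1 : (pureStrat aM : Mixed A).1 aM = 1 := by simp [pureStrat]
        rw [h1] at hmax
        have hbD : ct.bD that t = pureStrat aM :=
          Stmt13Helpers.eq_pure_of_one (le_antisymm (Stmt13Helpers.coord_le_one _ _) hmax)
        have hπD : exPay M.π (ct.bD t that) (ct.bD that t) ≤ minmaxID M := by
          rw [hbD]; exact hMbar _
        have hq2le : M.q n (M.lvl t) ≤ 1 := M.q_le_one _ _
        have hq2nn : 0 ≤ M.q n (M.lvl t) := M.q_nonneg _ _
        have hcf : condFitID ct t that ≤ minmaxID M := by
          unfold condFitID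
          rw [hlvl, hq1]
          by_cases hq2 : M.q n (M.lvl t) < 1
          · have hNE := ct.bN_mem t ht that hthat_ct (by rw [hlvl, hq1]; linarith)
            have hbN : ct.bN that t = pureStrat aM := hbr_other t hne _ _ hNE.2
            have hπN : exPay M.π (ct.bN t that) (ct.bN that t) ≤ minmaxID M := by
              rw [hbN]; exact hMbar _
            nlinarith [hπD, hπN, hq2nn, hq2]
          · have hq2e : M.q n (M.lvl t) = 1 := le_antisymm hq2le (not_lt.mp hq2)
            rw [hq2e]
            have hrw : ((0:ℝ) + 1) * exPay M.π (ct.bD t that) (ct.bD that t)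
                + (1 - 0 - 1) * exPay M.π (ct.bN t that) (ct.bN that t)
                = exPay M.π (ct.bD t that) (ct.bD that t) := by ring
            rw [hrw]
            exact hπD
        unfold typePayID
        linarith [hcf, hkt, hfit]
      · -- equal level
        have hq1 : M.q (M.lvl t) n = 0 := hq0 _ _ (by rw [heq]; exact lt_irrefl n)
        have hq2 : M.q n (M.lvl t) = 0 := hq0 _ _ (by rw [heq]; exact lt_irrefl n)
        have hNE := ct.bN_mem t ht that hthat_ct (by rw [hlvl, hq1, hq2]; norm_num)
        have hbN : ct.bN that t = pureStrat aM := hbr_other t hne _ _ hNE.2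
        have hπN : exPay M.π (ct.bN t that) (ct.bN that t) ≤ minmaxID M := by
          rw [hbN]; exact hMbar _
        unfold typePayID condFitID
        rw [hlvl, hq1, hq2, heq]
        have hknn : 0 ≤ M.k n := M.k_nonneg n
        nlinarith [hπN, hfit]
      · -- higher level
        have hq2 : M.q n (M.lvl t) = 0 := hq0 _ _ (not_lt.mpr hgt.le)
        have hq1pos : 0 < M.q (M.lvl t) n := (M.q_pos_iff _ _).mpr hgt
        have hq1le : M.q (M.lvl t) n ≤ 1 := M.q_le_one _ _
        have hDE := ct.bD_mem t ht that hthat_ct (by rw [hlvl]; exact hgt)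
        have hπD : exPay M.π (ct.bD t that) (ct.bD that t)
            ≤ M.π astar astar + devGainID M astar := by
          rcases hUthat _ hDE.1 with h | h
          · have h' : ct.bD that t = pureStrat astar := h
            rw [h']; exact hAst _
          · have h' : ct.bD that t = pureStrat aM := h
            rw [h']
            have := hMbar (ct.bD t that)
            linarith [hfit, M.k_nonneg n, hgnn]
        have hcost' := hcost (M.lvl t) hgt
        have hcf : condFitID ct t that
            ≤ M.π astar astar + M.q (M.lvl t) n * devGainID M astar := by
          unfold condFitID
          rw [hlvl, hq2]
          by_cases h1 : M.q (M.lvl t) n < 1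
          · have hNE := ct.bN_mem t ht that hthat_ct (by rw [hlvl, hq2]; linarith)
            have hbN : ct.bN that t = pureStrat aM := hbr_other t hne _ _ hNE.2
            have hπN : exPay M.π (ct.bN t that) (ct.bN that t) ≤ M.π astar astar := by
              rw [hbN]
              linarith [hMbar (ct.bN t that), hfit, M.k_nonneg n]
            nlinarith [hπD, hπN, hq1pos, h1]
          · have hq1e : M.q (M.lvl t) n = 1 := le_antisymm hq1le (not_lt.mp h1)
            rw [hq1e]
            nlinarith [hπD]
        unfold typePayID
        linarith [hcf, hcost']
    -- ESC
    intro μ' hμ'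
    refine ⟨1/2, by norm_num, ?_⟩
    intro ε hε ct hf hctd
    intro ν hνS hνne
    set F := typePayID ct with hF
    set S := ct.supp with hS
    have hthat_S : that ∈ S := hf.1 hthat_c
    have hμS : c.dist.w.support ⊆ S := hf.1
    have hFval : F that that = M.π astar astar - M.k n := hVal ct hf
    have hex : ∃ t₀ ∈ ν.w.support, t₀ ≠ that := by
      by_contra h
      push_neg at h
      apply hνne
      rw [hw]
      have hss : ν.w.support ⊆ {that} := fun t htm => Finset.mem_singleton.mpr (h t htm)
      have hνt : ν.w that = 1 := by
        have htot := ν.total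
        rwa [Finset.sum_subset hss (fun t _ htn => Finsupp.notMem_support_iff.mp htn),
          Finset.sum_singleton] at htot
      ext x
      by_cases hx : x = that
      · subst hx; rw [hνt, Finsupp.single_apply, if_pos rfl]
      · rw [Finsupp.single_apply, if_neg (fun hc => hx hc.symm)]
        exact Finsupp.notMem_support_iff.mp (fun hc => hx (h x hc))
    obtain ⟨t₀, ht₀, ht₀ne⟩ := hex
    have hν1 : ∑ t ∈ S, ν.w t = 1 := by
      rw [← Finset.sum_subset hνS (fun t _ htn => Finsupp.notMem_support_iff.mp htn)]
      exact ν.total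
    set c₀ := ∑ t ∈ S, ν.w t * ((M.π astar astar - M.k n) - F t that) with hc₀def
    have hc₀pos : 0 < c₀ := by
      refine Finset.sum_pos' (fun t htm => ?_) ⟨t₀, hνS ht₀, ?_⟩
      · by_cases h : t = that
        · subst h
          rw [hFval]
          simp
        · exact mul_nonneg (ν.nonneg t) (sub_nonneg.mpr (key ct hf t htm h).le)
      · exact mul_pos
          (lt_of_le_of_ne (ν.nonneg t₀) (Ne.symm (Finsupp.mem_support_iff.mp ht₀)))
          (sub_pos.mpr (key ct hf t₀ (hνS ht₀) ht₀ne))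
    set D := (∑ t ∈ S, ∑ t' ∈ S, c.dist.w t * ν.w t' * F t t')
      - (∑ t ∈ S, ∑ t' ∈ S, ν.w t * ν.w t' * F t t') with hD
    refine ⟨min (1/2) (c₀ / (2 * (|D| + 1))), ⟨?_, ?_⟩, ?_⟩
    · exact lt_min (by norm_num) (div_pos hc₀pos (by positivity))
    · exact lt_of_le_of_lt (min_le_left _ _) (by norm_num)
    intro ε' hε'
    have hε'0 : 0 < ε' := hε'.1
    have hε'half : ε' < 1/2 := lt_of_lt_of_le hε'.2 (min_le_left _ _)
    have hε'D : ε' * (2 * (|D| + 1)) < c₀ := by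
      have h2 := lt_of_lt_of_le hε'.2 (min_le_right _ _)
      rwa [lt_div_iff₀ (by positivity)] at h2
    set z := (1 - ε') • c.dist.w + ε' • ν.w with hz
    have hzS : z.support ⊆ S := by
      intro x hx
      have hx' := Finsupp.support_add hx
      rcases Finset.mem_union.mp hx' with h | h
      · exact hμS (Finsupp.support_smul h)
      · exact hνS (Finsupp.support_smul h)
    have hPz : ∀ x : T →₀ ℝ, x.support ⊆ S →
        playTID F x z = (1 - ε') * (∑ t ∈ S, ∑ t' ∈ S, x t * c.dist.w t' * F t t')
          + ε' * (∑ t ∈ S, ∑ t' ∈ S, x t * ν.w t' * F t t') := by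
      intro x hx
      rw [Stmt13Helpers.playT_superset F x z S hx hzS, Finset.mul_sum, Finset.mul_sum,
        ← Finset.sum_add_distrib]
      refine Finset.sum_congr rfl fun t _ => ?_
      rw [Finset.mul_sum, Finset.mul_sum, ← Finset.sum_add_distrib]
      refine Finset.sum_congr rfl fun t' _ => ?_
      have hzt : z t' = (1 - ε') * c.dist.w t' + ε' * ν.w t' := by
        simp [hz, Finsupp.add_apply, Finsupp.smul_apply, smul_eq_mul]
      rw [hzt]; ring
    have hcol : ∀ x : T →₀ ℝ, (∑ t ∈ S, ∑ t' ∈ S, x t * c.dist.w t' * F t t')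
        = ∑ t ∈ S, x t * F t that := by
      intro x
      refine Finset.sum_congr rfl fun t _ => ?_
      rw [hw, Finset.sum_eq_single_of_mem that hthat_S (fun t' _ hne' => by
        rw [Finsupp.single_apply, if_neg (fun hc => hne' hc.symm)]; ring)]
      rw [Finsupp.single_apply, if_pos rfl]; ring
    have hrow : (∑ t ∈ S, c.dist.w t * F t that) = F that that := by
      rw [hw, Finset.sum_eq_single_of_mem that hthat_S (fun t' _ hne' => by
        rw [Finsupp.single_apply, if_neg (fun hc => hne' hc.symm)]; ring)]
      rw [Finsupp.single_apply, if_pos rfl]; ring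
    have hdiff : ∑ t ∈ S, ν.w t * F t that = F that that - c₀ := by
      rw [hc₀def]
      have hsplit : ∑ t ∈ S, ν.w t * ((M.π astar astar - M.k n) - F t that)
          = (M.π astar astar - M.k n) * (∑ t ∈ S, ν.w t)
            - ∑ t ∈ S, ν.w t * F t that := by
        rw [Finset.mul_sum, ← Finset.sum_sub_distrib]
        exact Finset.sum_congr rfl fun t _ => by ring
      rw [hsplit, hν1, hFval]
      ring
    rw [hPz ν.w hνS, hPz c.dist.w hμS, hcol ν.w, hcol c.dist.w, hrow, hdiff]
    have hεD : ε' * D = ε' * (∑ t ∈ S, ∑ t' ∈ S, c.dist.w t * ν.w t' * F t t')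
        - ε' * (∑ t ∈ S, ∑ t' ∈ S, ν.w t * ν.w t' * F t t') := by
      rw [hD]; ring
    linarith [hεD, mul_le_mul_of_nonneg_left (neg_abs_le D) hε'0.le,
      mul_lt_mul_of_pos_right hε'half hc₀pos, hε'D, abs_nonneg D]
end
end
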